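/- arXiv:2407.00083 — 10 statements merged into one kernel-verified Lean document; each statement's English description precedes it below -/
import Mathlib

section
/- Let S be a finite semigroup whose complex semigroup algebra ℂS is unital. Then for every s ∈ S, the set φ*(s) = {e ∈ E(S) | se = s} of idempotent right identities of s is nonempty, and likewise φ⁺(s) = {e ∈ E(S) | es = s} is nonempty. -/
/-- The set of idempotent right identities of `s`: φ*(s) = {e ∈ E(S) | se = s}. -/
def rIds {S : Type*} [Mul S] (s : S) : Set S := {e | e * e = e ∧ s * e = s}

/-- The set of idempotent left identities of `s`: φ⁺(s) = {e ∈ E(S) | es = s}. -/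
def lIds {S : Type*} [Mul S] (s : S) : Set S := {e | e * e = e ∧ e * s = s}

/-!
If `u` is the unit of `ℂS`, then `s = s * u`, so the basis element `s` lies in the support of
`s * u ⊆ s * supp u`; hence `s * t = s` for some `t ∈ S`. The right stabilizer
`{t | s * t = s}` is then a nonempty finite subsemigroup, and every such semigroup contains an
idempotent. The left case is symmetric.
-/

theorem exists_idempotent_mem_of_finite {M : Type*} [Semigroup M] [Finite M]
    (s : Set M) (hs : s.Nonempty) (hmul : ∀ᵉ (x ∈ s) (y ∈ s), x * y ∈ s) : ∃ m ∈ s, m * m = m := by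
  let : TopologicalSpace M := ⊥
  have : DiscreteTopology M := ⟨rfl⟩
  exact exists_idempotent_in_compact_subsemigroup (fun _ => continuous_of_discreteTopology)
    s hs s.toFinite.isCompact hmul

namespace MonoidAlgebra

variable {k G : Type*} [Semiring k] [Nontrivial k] [Mul G]

theorem exists_mul_eq_self_of_single_mul_eq {s : G} {u : k[G]}
    (hu : single s (1 : k) * u = single s 1) : ∃ t, s * t = s := by
  classical
  have hs : s ∈ (single s (1 : k) * u).coeff.support := by
    rw [hu]; simp [coeff_single]
  obtain ⟨t, -, ht⟩ := Finset.mem_image.mp (support_coeff_single_mul_subset u 1 s hs)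
  exact ⟨t, ht⟩

theorem exists_mul_eq_self_of_mul_single_eq {s : G} {u : k[G]}
    (hu : u * single s (1 : k) = single s 1) : ∃ t, t * s = s := by
  classical
  have hs : s ∈ (u * single s (1 : k)).coeff.support := by
    rw [hu]; simp [coeff_single]
  obtain ⟨t, -, ht⟩ := Finset.mem_image.mp (support_coeff_mul_single_subset u 1 s hs)
  exact ⟨t, ht⟩

end MonoidAlgebra

/-- If `S` is a finite semigroup whose complex semigroup algebra `ℂS` is unital, then for
every `s ∈ S` the sets `φ*(s)` and `φ⁺(s)` are nonempty. -/
theorem stmt0 {S : Type*} [Semigroup S] [Fintype S]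
    (h : ∃ u : MonoidAlgebra ℂ S, ∀ a : MonoidAlgebra ℂ S, u * a = a ∧ a * u = a) :
    ∀ s : S, (rIds s).Nonempty ∧ (lIds s).Nonempty := by
  obtain ⟨u, hu⟩ := h
  intro s
  constructor
  · obtain ⟨t, ht⟩ := MonoidAlgebra.exists_mul_eq_self_of_single_mul_eq (hu _).2
    obtain ⟨e, he, hee⟩ := exists_idempotent_mem_of_finite {t | s * t = s} ⟨t, ht⟩
      fun a (ha : s * a = s) b (hb : s * b = s) =>
        show s * (a * b) = s by rw [← mul_assoc, ha, hb]
    exact ⟨e, hee, he⟩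
  · obtain ⟨t, ht⟩ := MonoidAlgebra.exists_mul_eq_self_of_mul_single_eq (hu _).1
    obtain ⟨e, he, hee⟩ := exists_idempotent_mem_of_finite {t | t * s = s} ⟨t, ht⟩
      fun a (ha : a * s = s) b (hb : b * s = s) =>
        show a * b * s = s by rw [mul_assoc, hb, ha]
    exact ⟨e, hee, he⟩
end

section
/- Let S be a finite singleton-rich semigroup. For all s, t ∈ S one has s** = t** if and only if φ*(s) = φ*(t), where φ*(s) = {e ∈ E(S) | se = s} and s** denotes the kernel (minimal ideal) of the subsemigroup generated by φ*(s). -/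
open scoped Classical

/-- `x` is the (necessarily unique) element of a singleton kernel (minimal ideal) of the
subsemigroup `T`: `{x}` is an ideal of `T`, hence the minimal ideal of `T`. -/
def IsKer {S : Type*} [Semigroup S] (T : Subsemigroup S) (x : S) : Prop :=
  x ∈ T ∧ ∀ a ∈ T, a * x = x ∧ x * a = x

/-- The natural partial order on idempotents: `e ≤ f` iff `ef = fe = e`. -/
def nle {S : Type*} [Mul S] (e f : S) : Prop := e * f = e ∧ f * e = e

/-- The relation `≪`: `s ≪ t` iff `s = s⁺ t s*`, where `sa s = s*` and `pl s = s⁺`. -/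
def ll {S : Type*} [Mul S] (sa pl : S → S) (s t : S) : Prop := s = pl s * t * sa s

/-! The kernel `x` of `⟨φ*(s)⟩` has the same idempotent right identities as `s`: an idempotent
`e ∈ φ*(s)` fixes `x` because `{x}` is an ideal, and conversely `xe = x` gives
`se = sxe = sx = s`. So `s** = t**` forces `φ*(s) = φ*(s**) = φ*(t**) = φ*(t)`, while
`φ*(s) = φ*(t)` makes `s**` and `t**` kernels of the same subsemigroup, which has at most one
singleton kernel. -/

lemma IsKer.unique {S : Type*} [Semigroup S] {T : Subsemigroup S} {x y : S}
    (hx : IsKer T x) (hy : IsKer T y) : x = y :=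
  calc x = x * y := ((hx.2 y hy.1).2).symm
    _ = y := (hy.2 x hx.1).1

lemma mul_eq_self_of_mem_closure_rIds {S : Type*} [Semigroup S] {s x : S}
    (hx : x ∈ Subsemigroup.closure (rIds s)) : s * x = s := by
  induction hx using Subsemigroup.closure_induction with
  | mem e he => exact he.2
  | mul a b _ _ ha hb => rw [← mul_assoc, ha, hb]

lemma rIds_eq_of_isKer {S : Type*} [Semigroup S] {s x : S}
    (hx : IsKer (Subsemigroup.closure (rIds s)) x) : rIds x = rIds s := by
  ext e
  constructor
  · rintro ⟨he, hxe⟩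
    have hsx : s * x = s := mul_eq_self_of_mem_closure_rIds hx.1
    exact ⟨he, by rw [← hsx, mul_assoc, hxe]⟩
  · intro he
    exact ⟨he.1, (hx.2 e (Subsemigroup.subset_closure he)).2⟩

theorem stmt1_general {S : Type*} [Semigroup S] (sa : S → S)
    (hsa : ∀ s : S, IsKer (Subsemigroup.closure (rIds s)) (sa s)) (s t : S) :
    sa s = sa t ↔ rIds s = rIds t := by
  constructor
  · intro h
    rw [← rIds_eq_of_isKer (hsa s), ← rIds_eq_of_isKer (hsa t), h]
  · intro h
    exact (hsa s).unique (h ▸ hsa t)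

/-- In a finite singleton-rich semigroup, `s** = t**` iff `φ*(s) = φ*(t)`. -/
theorem stmt1 {S : Type*} [Semigroup S] [Fintype S] (sa : S → S)
    (hsa : ∀ s : S, IsKer (Subsemigroup.closure (rIds s)) (sa s)) (s t : S) :
    sa s = sa t ↔ rIds s = rIds t :=
  stmt1_general sa hsa s t
end

section
/- Let S be a finite singleton-rich semigroup, s ∈ S and e, f ∈ E(S). Then es ≪ s, se ≪ s, and esf ≪ s, where x ≪ y means x = x⁺ y x*. -/
open scoped Classical

/-!
Every element of the subsemigroup generated by the idempotent left identities of `x` is a left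
identity of `x`, so `x⁺ x x* = x`. If `e` is idempotent and `e x = x`, then `e` is one of the
generators, and the kernel element absorbs it: `x⁺ e = x⁺`. For `x = e s` this gives
`x⁺ s x* = x⁺ e s x* = x⁺ x x* = x`; the right-hand and two-sided cases are dual.
-/

section

variable {S : Type*} [Semigroup S]

theorem mul_eq_of_mem_closure_rIds {x t : S} (ht : t ∈ Subsemigroup.closure (rIds x)) :
    x * t = x := by
  induction ht using Subsemigroup.closure_induction with
  | mem a ha => exact ha.2
  | mul a b _ _ ha hb => rw [← mul_assoc, ha, hb]

theorem mul_eq_of_mem_closure_lIds {x t : S} (ht : t ∈ Subsemigroup.closure (lIds x)) :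
    t * x = x := by
  induction ht using Subsemigroup.closure_induction with
  | mem a ha => exact ha.2
  | mul a b _ _ ha hb => rw [mul_assoc, hb, ha]

theorem IsKer.mul_eq_left {T : Subsemigroup S} {k a : S} (hk : IsKer T k) (ha : a ∈ T) :
    k * a = k :=
  (hk.2 a ha).2

theorem IsKer.mul_eq_right {T : Subsemigroup S} {k a : S} (hk : IsKer T k) (ha : a ∈ T) :
    a * k = k :=
  (hk.2 a ha).1

theorem lKer_mul_mul_rKer {x p q : S} (hp : IsKer (Subsemigroup.closure (lIds x)) p)
    (hq : IsKer (Subsemigroup.closure (rIds x)) q) : p * x * q = x := by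
  rw [mul_eq_of_mem_closure_lIds hp.1, mul_eq_of_mem_closure_rIds hq.1]

variable {sa pl : S → S} {x e f : S}

theorem pl_mul_idem (hpl : IsKer (Subsemigroup.closure (lIds x)) (pl x)) (he : e * e = e)
    (hex : e * x = x) : pl x * e = pl x :=
  hpl.mul_eq_left (Subsemigroup.subset_closure ⟨he, hex⟩)

theorem idem_mul_sa (hsa : IsKer (Subsemigroup.closure (rIds x)) (sa x)) (hf : f * f = f)
    (hxf : x * f = x) : f * sa x = sa x :=
  hsa.mul_eq_right (Subsemigroup.subset_closure ⟨hf, hxf⟩)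

theorem ll_idem_mul (s : S) (hsa : IsKer (Subsemigroup.closure (rIds (e * s))) (sa (e * s)))
    (hpl : IsKer (Subsemigroup.closure (lIds (e * s))) (pl (e * s))) (he : e * e = e) :
    ll sa pl (e * s) s := by
  have hpe := pl_mul_idem hpl he (by rw [← mul_assoc, he])
  calc e * s = pl (e * s) * (e * s) * sa (e * s) := (lKer_mul_mul_rKer hpl hsa).symm
    _ = pl (e * s) * s * sa (e * s) := by rw [← mul_assoc, hpe]

theorem ll_mul_idem (s : S) (hsa : IsKer (Subsemigroup.closure (rIds (s * f))) (sa (s * f)))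
    (hpl : IsKer (Subsemigroup.closure (lIds (s * f))) (pl (s * f))) (hf : f * f = f) :
    ll sa pl (s * f) s := by
  have hfs := idem_mul_sa hsa hf (by rw [mul_assoc, hf])
  calc s * f = pl (s * f) * (s * f) * sa (s * f) := (lKer_mul_mul_rKer hpl hsa).symm
    _ = pl (s * f) * s * sa (s * f) := by rw [← mul_assoc, mul_assoc _ f, hfs]

theorem ll_idem_mul_idem (s : S)
    (hsa : IsKer (Subsemigroup.closure (rIds (e * s * f))) (sa (e * s * f)))
    (hpl : IsKer (Subsemigroup.closure (lIds (e * s * f))) (pl (e * s * f))) (he : e * e = e)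
    (hf : f * f = f) : ll sa pl (e * s * f) s := by
  set x := e * s * f
  have hpe := pl_mul_idem hpl he (by rw [← mul_assoc, ← mul_assoc, he])
  have hfs := idem_mul_sa hsa hf (by rw [mul_assoc, hf])
  calc x = pl x * x * sa x := (lKer_mul_mul_rKer hpl hsa).symm
    _ = pl x * s * sa x := by rw [← mul_assoc, ← mul_assoc, hpe, mul_assoc _ f, hfs]

end

theorem stmt3_general {S : Type*} [Semigroup S] (sa pl : S → S)
    (hsa : ∀ s : S, IsKer (Subsemigroup.closure (rIds s)) (sa s))
    (hpl : ∀ s : S, IsKer (Subsemigroup.closure (lIds s)) (pl s))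
    (s e f : S) (he : e * e = e) (hf : f * f = f) :
    ll sa pl (e * s) s ∧ ll sa pl (s * e) s ∧ ll sa pl (e * s * f) s :=
  ⟨ll_idem_mul s (hsa _) (hpl _) he, ll_mul_idem s (hsa _) (hpl _) he,
    ll_idem_mul_idem s (hsa _) (hpl _) he hf⟩

/-- In a finite singleton-rich semigroup, for `s ∈ S` and idempotents `e, f`:
`es ≪ s`, `se ≪ s`, and `esf ≪ s`. -/
theorem stmt3 {S : Type*} [Semigroup S] [Fintype S] (sa pl : S → S)
    (hsa : ∀ s : S, IsKer (Subsemigroup.closure (rIds s)) (sa s))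
    (hpl : ∀ s : S, IsKer (Subsemigroup.closure (lIds s)) (pl s))
    (s e f : S) (he : e * e = e) (hf : f * f = f) :
    ll sa pl (e * s) s ∧ ll sa pl (s * e) s ∧ ll sa pl (e * s * f) s :=
  stmt3_general sa pl hsa hpl s e f he hf
end

section
/- Let S be a finite singleton-rich semigroup and s₁, s₂ ∈ S. Then (s₁s₂)* ≤ s₂* and (s₁s₂)⁺ ≤ s₁⁺, where ≤ is the natural partial order on idempotents (e ≤ f iff ef = fe = e). -/
open scoped Classical

theorem rIds_subset_rIds_mul_left {S : Type*} [Semigroup S] (s t : S) :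
    rIds t ⊆ rIds (s * t) := fun e ⟨he, hte⟩ => ⟨he, by rw [mul_assoc, hte]⟩

theorem lIds_subset_lIds_mul_right {S : Type*} [Semigroup S] (s t : S) :
    lIds s ⊆ lIds (s * t) := fun e ⟨he, hes⟩ => ⟨he, by rw [← mul_assoc, hes]⟩

theorem IsKer.nle_of_mem {S : Type*} [Semigroup S] {T : Subsemigroup S} {x y : S}
    (hx : IsKer T x) (hy : y ∈ T) : nle x y :=
  ⟨(hx.2 y hy).2, (hx.2 y hy).1⟩

theorem stmt4_general {S : Type*} [Semigroup S] (sa pl : S → S)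
    (hsa : ∀ s : S, IsKer (Subsemigroup.closure (rIds s)) (sa s))
    (hpl : ∀ s : S, IsKer (Subsemigroup.closure (lIds s)) (pl s))
    (s₁ s₂ : S) :
    nle (sa (s₁ * s₂)) (sa s₂) ∧ nle (pl (s₁ * s₂)) (pl s₁) :=
  ⟨(hsa (s₁ * s₂)).nle_of_mem <|
      Subsemigroup.closure_mono (rIds_subset_rIds_mul_left s₁ s₂) (hsa s₂).1,
    (hpl (s₁ * s₂)).nle_of_mem <|
      Subsemigroup.closure_mono (lIds_subset_lIds_mul_right s₁ s₂) (hpl s₁).1⟩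

/-- In a finite singleton-rich semigroup, `(s₁s₂)* ≤ s₂*` and `(s₁s₂)⁺ ≤ s₁⁺`. -/
theorem stmt4 {S : Type*} [Semigroup S] [Fintype S] (sa pl : S → S)
    (hsa : ∀ s : S, IsKer (Subsemigroup.closure (rIds s)) (sa s))
    (hpl : ∀ s : S, IsKer (Subsemigroup.closure (lIds s)) (pl s))
    (s₁ s₂ : S) :
    nle (sa (s₁ * s₂)) (sa s₂) ∧ nle (pl (s₁ * s₂)) (pl s₁) :=
  stmt4_general sa pl hsa hpl s₁ s₂
end

section
/- Let S be a finite singleton-rich semigroup, s, t ∈ S, and define the sequence s^φ₀ = s, t^φ₀ = t, s^φ_{i+1} = s^φ_i ((s^φ_i)* t^φ_i)⁺, t^φ_{i+1} = (s^φ_i)* t^φ_i. Then for all i ≥ 0: s^φ_{i+1} = s · φ(s^φ_i, t^φ_i) and t^φ_{i+1} = φ(s^φ_i, t^φ_i) · t, where φ(x,y) = (x* y)⁺. Moreover φ(s^φ_i, t^φ_i) = φ(s^φ_i, t) for all i ≥ 0. -/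
open scoped Classical

/-- φ(x,y) = (x* y)⁺. -/
def phiF {S : Type*} [Mul S] (sa pl : S → S) (x y : S) : S := pl (sa x * y)

/-- ψ(x,y) = (x y⁺)*. -/
def psiF {S : Type*} [Mul S] (sa pl : S → S) (x y : S) : S := sa (x * pl y)

/-- The φ-sequence: `(s^φ₀, t^φ₀) = (s, t)`,
`s^φ_{i+1} = s^φ_i φ(s^φ_i, t^φ_i)`, `t^φ_{i+1} = (s^φ_i)* t^φ_i`. -/
def phiSeq {S : Type*} [Mul S] (sa pl : S → S) (s t : S) : ℕ → S × S
  | 0 => (s, t)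
  | i + 1 =>
      let p := phiSeq sa pl s t i
      (p.1 * phiF sa pl p.1 p.2, sa p.1 * p.2)

/-- The ψ-sequence: `(s^ψ₀, t^ψ₀) = (s, t)`,
`s^ψ_{i+1} = s^ψ_i (t^ψ_i)⁺`, `t^ψ_{i+1} = ψ(s^ψ_i, t^ψ_i) t^ψ_i`. -/
def psiSeq {S : Type*} [Mul S] (sa pl : S → S) (s t : S) : ℕ → S × S
  | 0 => (s, t)
  | i + 1 =>
      let p := psiSeq sa pl s t i
      (p.1 * pl p.2, psiF sa pl p.1 p.2 * p.2)

/-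
Write `x* = sa x`, `x⁺ = pl x` and `φᵢ = φ(s^φᵢ, t^φᵢ)`. Since `x*` is a zero of the subsemigroup generated
by the idempotent right identities of `x`, each of them absorbs `x*` on both sides; dually for `x⁺`.
Hence `φ(x, y) y = x* y` (as `x*` is an idempotent left identity of `x* y`), and an idempotent `e`
satisfies `(x e)* e = e (x e)* = (x e)*`, being a right identity of `x e`. By induction,
`s^φ_{i+1} = s^φᵢ φᵢ = s φᵢ` and `t^φ_{i+1} = φᵢ t`; applying the second fact with `e = φᵢ` gives
`(s^φ_{i+1})* t^φ_{i+1} = (s^φ_{i+1})* t`, which is `φ_{i+1} = φ(s^φ_{i+1}, t)`, and `φᵢ φ_{i+1} = φ_{i+1}`.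
-/

section Identities

variable {S : Type*} [Semigroup S]

lemma mul_eq_self_of_mem_closure_lIds {x a : S} (ha : a ∈ Subsemigroup.closure (lIds x)) :
    a * x = x := by
  induction ha using Subsemigroup.closure_induction with
  | mem e he => exact he.2
  | mul a b _ _ ha hb => rw [mul_assoc, hb, ha]

lemma mem_rIds_mul_self {e : S} (he : IsIdempotentElem e) (x : S) : e ∈ rIds (x * e) :=
  ⟨he, by rw [mul_assoc, he.eq]⟩

lemma mem_lIds_self_mul {e : S} (he : IsIdempotentElem e) (x : S) : e ∈ lIds (e * x) :=
  ⟨he, by rw [← mul_assoc, he.eq]⟩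

end Identities

section Kernel

variable {S : Type*} [Semigroup S] {sa pl : S → S}

section Star

variable (hsa : ∀ s : S, IsKer (Subsemigroup.closure (rIds s)) (sa s))
include hsa

lemma isIdempotentElem_sa (x : S) : IsIdempotentElem (sa x) :=
  ((hsa x).2 _ (hsa x).1).1

lemma mul_sa_of_mem_rIds {x e : S} (he : e ∈ rIds x) : e * sa x = sa x :=
  ((hsa x).2 e (Subsemigroup.subset_closure he)).1

lemma sa_mul_of_mem_rIds {x e : S} (he : e ∈ rIds x) : sa x * e = sa x :=
  ((hsa x).2 e (Subsemigroup.subset_closure he)).2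

lemma phiF_mul_idem_idem_mul {x e : S} (he : IsIdempotentElem e) (y : S) :
    phiF sa pl (x * e) (e * y) = phiF sa pl (x * e) y := by
  rw [phiF, phiF, ← mul_assoc, sa_mul_of_mem_rIds hsa (mem_rIds_mul_self he x)]

end Star

section Plus

variable (hpl : ∀ s : S, IsKer (Subsemigroup.closure (lIds s)) (pl s))
include hpl

lemma pl_mul (x : S) : pl x * x = x :=
  mul_eq_self_of_mem_closure_lIds (hpl x).1

lemma isIdempotentElem_pl (x : S) : IsIdempotentElem (pl x) :=
  ((hpl x).2 _ (hpl x).1).1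

lemma mul_pl_of_mem_lIds {x e : S} (he : e ∈ lIds x) : e * pl x = pl x :=
  ((hpl x).2 e (Subsemigroup.subset_closure he)).1

lemma pl_mul_of_mem_lIds {x e : S} (he : e ∈ lIds x) : pl x * e = pl x :=
  ((hpl x).2 e (Subsemigroup.subset_closure he)).2

lemma pl_idem_mul_mul {e : S} (he : IsIdempotentElem e) (y : S) : pl (e * y) * y = e * y := by
  calc pl (e * y) * y = pl (e * y) * e * y := by
        rw [pl_mul_of_mem_lIds hpl (mem_lIds_self_mul he y)]
    _ = e * y := by rw [mul_assoc, pl_mul hpl]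

end Plus

variable (hsa : ∀ s : S, IsKer (Subsemigroup.closure (rIds s)) (sa s))
  (hpl : ∀ s : S, IsKer (Subsemigroup.closure (lIds s)) (pl s))
include hsa hpl

lemma phiF_mul (x y : S) : phiF sa pl x y * y = sa x * y :=
  pl_idem_mul_mul hpl (isIdempotentElem_sa hsa x) y

lemma idem_mul_phiF_mul_idem {x e : S} (he : IsIdempotentElem e) (y : S) :
    e * phiF sa pl (x * e) y = phiF sa pl (x * e) y := by
  have hleft : e ∈ lIds (sa (x * e) * y) :=
    ⟨he, by rw [← mul_assoc, mul_sa_of_mem_rIds hsa (mem_rIds_mul_self he x)]⟩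
  exact mul_pl_of_mem_lIds hpl hleft

end Kernel

theorem stmt10_general {S : Type*} [Semigroup S] (sa pl : S → S)
    (hsa : ∀ s : S, IsKer (Subsemigroup.closure (rIds s)) (sa s))
    (hpl : ∀ s : S, IsKer (Subsemigroup.closure (lIds s)) (pl s))
    (s t : S) :
    ∀ i : ℕ,
      (phiSeq sa pl s t (i + 1)).1 = s * phiF sa pl (phiSeq sa pl s t i).1 (phiSeq sa pl s t i).2 ∧
      (phiSeq sa pl s t (i + 1)).2 = phiF sa pl (phiSeq sa pl s t i).1 (phiSeq sa pl s t i).2 * t ∧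
      phiF sa pl (phiSeq sa pl s t i).1 (phiSeq sa pl s t i).2 =
        phiF sa pl (phiSeq sa pl s t i).1 t := by
  intro i
  induction i with
  | zero => exact ⟨rfl, (phiF_mul hsa hpl s t).symm, rfl⟩
  | succ i ih =>
    obtain ⟨hs, ht, -⟩ := ih
    set x := (phiSeq sa pl s t i).1
    set e := phiF sa pl x (phiSeq sa pl s t i).2
    set y := (phiSeq sa pl s t (i + 1)).2
    change x * e = s * e at hs
    have he : IsIdempotentElem e := isIdempotentElem_pl hpl _
    have hphi : phiF sa pl (x * e) y = phiF sa pl (x * e) t := by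
      rw [ht, phiF_mul_idem_idem_mul hsa he]
    refine ⟨?_, ?_, hphi⟩
    · change x * e * phiF sa pl (x * e) y = s * phiF sa pl (x * e) y
      rw [hs, mul_assoc, idem_mul_phiF_mul_idem hsa hpl he]
    · change sa (x * e) * y = phiF sa pl (x * e) y * t
      rw [hphi, phiF_mul hsa hpl, ht, ← mul_assoc, sa_mul_of_mem_rIds hsa (mem_rIds_mul_self he x)]

/-- `s^φ_{i+1} = s φ(s^φ_i, t^φ_i)`, `t^φ_{i+1} = φ(s^φ_i, t^φ_i) t`, and
`φ(s^φ_i, t^φ_i) = φ(s^φ_i, t)` for all `i ≥ 0`. -/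
theorem stmt10 {S : Type*} [Semigroup S] [Fintype S] (sa pl : S → S)
    (hsa : ∀ s : S, IsKer (Subsemigroup.closure (rIds s)) (sa s))
    (hpl : ∀ s : S, IsKer (Subsemigroup.closure (lIds s)) (pl s))
    (s t : S) :
    ∀ i : ℕ,
      (phiSeq sa pl s t (i + 1)).1 = s * phiF sa pl (phiSeq sa pl s t i).1 (phiSeq sa pl s t i).2 ∧
      (phiSeq sa pl s t (i + 1)).2 = phiF sa pl (phiSeq sa pl s t i).1 (phiSeq sa pl s t i).2 * t ∧
      phiF sa pl (phiSeq sa pl s t i).1 (phiSeq sa pl s t i).2 =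
        phiF sa pl (phiSeq sa pl s t i).1 t :=
  stmt10_general sa pl hsa hpl s t
end

section
/- Let S be a finite singleton-rich semigroup with principal series S = S₁ ⊋ S₂ ⊋ ⋯ ⊋ S_l ⊋ S_{l+1} = ∅. If a principal factor Sᵢ/S_{i+1} is not null, then it is an inverse completely 0-simple semigroup or a group; in particular it is isomorphic to a Brandt semigroup ℬₙ(G) over a finite group G. -/
open scoped Classical

/-- `I` is a (two-sided) ideal of `S` (the empty set is allowed, for convenience). -/
def IsIdealSet {S : Type*} [Mul S] (I : Set S) : Prop :=
  ∀ a : S, ∀ b ∈ I, a * b ∈ I ∧ b * a ∈ I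

/-- Multiplication of the Brandt semigroup `ℬₙ(G)`: nonzero elements are triples `(i,g,j)`,
`none` is the zero, and `(i,g,j)(k,h,l) = (i,gh,l)` if `j = k`, else `0`. -/
def brandtMul {G : Type*} [Mul G] {n : ℕ} :
    Option (Fin n × G × Fin n) → Option (Fin n × G × Fin n) → Option (Fin n × G × Fin n)
  | some (i, g, j), some (k, h, l) => if j = k then some (i, g * h, l) else none
  | _, _ => none

/-- Multiplication of the principal (Rees) factor `A/B`: elements are `A \ B` together with
a zero (`none`); the product of two nonzero elements is their product in `S` if it stays in
`A \ B`, and `0` otherwise. -/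
noncomputable def facMul {S : Type*} [Mul S] (A B : Set S) :
    Option {x : S // x ∈ A \ B} → Option {x : S // x ∈ A \ B} → Option {x : S // x ∈ A \ B}
  | some a, some b =>
      if h : (a.1 * b.1) ∈ A \ B then some ⟨a.1 * b.1, h⟩ else none
  | _, _ => none

/-!
Let `N = A \ B` be the nonzero part of the non-null principal factor `A / B`. Minimality of the
factor makes it `0`-simple (`y ∈ S x S` for all `x, y ∈ N`); since every nonempty subsemigroup of
a finite semigroup contains an idempotent, nonzero idempotents are then primitive.
Singleton-richness says that `sa x` is a right identity of `x` lying below every idempotent right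
identity of `x` (dually for `pl x`); with primitivity, `sa x` is the only idempotent right
identity of `x` in `N`. Hence each `x ∈ N` has an inverse `x'` with `x x' = pl x` and
`x' x = sa x`, two nonzero idempotents with nonzero product coincide, and `x y ≠ 0` exactly when
`sa x = pl y`. Fixing a nonzero idempotent `e₀` and, for each nonzero idempotent `e`, an element
`r e` with `pl (r e) = e`, `sa (r e) = e₀` and its inverse `r' e`, the map
`x ↦ (pl x, r' (pl x) * x * r (sa x), sa x)` is an isomorphism onto the Brandt semigroup over the
group `{g ∈ N | pl g = sa g = e₀}`.
-/

section FiniteSemigroup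

variable {M : Type*} [Semigroup M] [Finite M]

theorem exists_isIdempotentElem_of_mul_mem {s : Set M} (hs : s.Nonempty)
    (hmul : ∀ a ∈ s, ∀ b ∈ s, a * b ∈ s) : ∃ e ∈ s, IsIdempotentElem e := by
  let _ : TopologicalSpace M := ⊥
  have : DiscreteTopology M := ⟨rfl⟩
  exact exists_idempotent_in_compact_subsemigroup (fun _ => continuous_of_discreteTopology) s hs
    s.toFinite.isCompact hmul

theorem exists_isIdempotentElem_of_eq_mul_mul {x p q : M} (h : x = p * x * q) {T U : Set M}
    (hT : ∀ a ∈ T, ∀ b ∈ T, a * b ∈ T) (hU : ∀ a ∈ U, ∀ b ∈ U, a * b ∈ U)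
    (hp : p ∈ T) (hq : q ∈ U) :
    ∃ e ∈ T, ∃ f ∈ U,
      IsIdempotentElem e ∧ IsIdempotentElem f ∧ e * x = x ∧ x * f = x := by
  have : Finite Mᵐᵒᵖ := Finite.of_equiv _ MulOpposite.opEquiv
  -- the pairs `(a, b)` with `x = a * x * b` form a subsemigroup of `M × Mᵐᵒᵖ`
  obtain ⟨⟨e, f⟩, ⟨hx, he, hf⟩, hidem⟩ := exists_isIdempotentElem_of_mul_mem
    (s := {z : M × Mᵐᵒᵖ | x = z.1 * x * z.2.unop ∧ z.1 ∈ T ∧ z.2.unop ∈ U})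
    ⟨(p, .op q), h, hp, hq⟩ (by
      rintro ⟨a, b⟩ ⟨hab, ha, hb⟩ ⟨a', b'⟩ ⟨hab', ha', hb'⟩
      refine ⟨?_, hT a ha a' ha', hU _ hb' _ hb⟩
      calc x = a * (a' * x * b'.unop) * b.unop := by rw [← hab', ← hab]
        _ = a * a' * x * (b'.unop * b.unop) := by simp only [mul_assoc])
  have hee : IsIdempotentElem e := congrArg Prod.fst hidem
  have hff : IsIdempotentElem f.unop := congrArg (fun z : M × Mᵐᵒᵖ => z.2.unop) hidem
  refine ⟨e, he, f.unop, hf, hee, hff, ?_, ?_⟩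
  · calc e * x = e * (e * x * f.unop) := by rw [← hx]
      _ = e * e * x * f.unop := by simp only [mul_assoc]
      _ = x := by rw [hee.eq, ← hx]
  · calc x * f.unop = e * x * f.unop * f.unop := by rw [← hx]
      _ = e * x * (f.unop * f.unop) := by simp only [mul_assoc]
      _ = x := by rw [hff.eq, ← hx]

end FiniteSemigroup

section SingletonRich

variable {S : Type*} [Semigroup S]

structure IsSingletonRich (sa pl : S → S) : Prop where
  isKer_rIds : ∀ s, IsKer (Subsemigroup.closure (rIds s)) (sa s)
  isKer_lIds : ∀ s, IsKer (Subsemigroup.closure (lIds s)) (pl s)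

namespace IsSingletonRich

variable {sa pl : S → S}

theorem mul_sa (h : IsSingletonRich sa pl) (x : S) : x * sa x = x :=
  mul_eq_of_mem_closure_rIds (h.isKer_rIds x).1

theorem pl_mul (h : IsSingletonRich sa pl) (x : S) : pl x * x = x :=
  mul_eq_of_mem_closure_lIds (h.isKer_lIds x).1

theorem isIdempotentElem_sa (h : IsSingletonRich sa pl) (x : S) : IsIdempotentElem (sa x) :=
  ((h.isKer_rIds x).2 _ (h.isKer_rIds x).1).1

theorem isIdempotentElem_pl (h : IsSingletonRich sa pl) (x : S) : IsIdempotentElem (pl x) :=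
  ((h.isKer_lIds x).2 _ (h.isKer_lIds x).1).1

theorem sa_nle (h : IsSingletonRich sa pl) {x e : S} (he : IsIdempotentElem e)
    (hxe : x * e = x) : nle (sa x) e :=
  ((h.isKer_rIds x).2 e (Subsemigroup.subset_closure ⟨he, hxe⟩)).symm

theorem pl_nle (h : IsSingletonRich sa pl) {x e : S} (he : IsIdempotentElem e)
    (hex : e * x = x) : nle (pl x) e :=
  ((h.isKer_lIds x).2 e (Subsemigroup.subset_closure ⟨he, hex⟩)).symm

theorem sa_eq_self (h : IsSingletonRich sa pl) {e : S} (he : IsIdempotentElem e) : sa e = e :=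
  (h.sa_nle he he.eq).2.symm.trans (h.mul_sa e)

theorem pl_eq_self (h : IsSingletonRich sa pl) {e : S} (he : IsIdempotentElem e) : pl e = e :=
  (h.pl_nle he he.eq).1.symm.trans (h.pl_mul e)

theorem mul_eq_left_of_mul_eq_right (h : IsSingletonRich sa pl) {u v : S}
    (hu : IsIdempotentElem u) (hv : IsIdempotentElem v) (huv : u * v = v) : v * u = v := by
  simpa only [h.pl_eq_self hv] using (h.pl_nle hu huv).1

theorem mul_eq_right_of_mul_eq_left (h : IsSingletonRich sa pl) {u v : S}
    (hu : IsIdempotentElem u) (hv : IsIdempotentElem v) (huv : u * v = u) : v * u = u := by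
  simpa only [h.sa_eq_self hu] using (h.sa_nle hv huv).2

end IsSingletonRich

end SingletonRich

section PrincipalFactor

variable {S : Type*} [Semigroup S]

namespace IsIdealSet

variable {I : Set S}

theorem mul_mem_left (hI : IsIdealSet I) (a : S) {b : S} (hb : b ∈ I) : a * b ∈ I :=
  (hI a b hb).1

theorem mul_mem_right (hI : IsIdealSet I) {b : S} (hb : b ∈ I) (a : S) : b * a ∈ I :=
  (hI a b hb).2

theorem notMem_of_mul_notMem_left (hI : IsIdealSet I) {a b : S} (h : a * b ∉ I) : a ∉ I :=
  fun ha => h (hI.mul_mem_right ha b)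

theorem notMem_of_mul_notMem_right (hI : IsIdealSet I) {a b : S} (h : a * b ∉ I) : b ∉ I :=
  fun hb => h (hI.mul_mem_left a hb)

theorem union {J : Set S} (hI : IsIdealSet I) (hJ : IsIdealSet J) : IsIdealSet (I ∪ J) := by
  rintro a b (hb | hb)
  exacts [⟨.inl (hI.mul_mem_left a hb), .inl (hI.mul_mem_right hb a)⟩,
    ⟨.inr (hJ.mul_mem_left a hb), .inr (hJ.mul_mem_right hb a)⟩]

end IsIdealSet

structure IsNonNullPrincipalFactor (A B : Set S) : Prop where
  isIdealSet_A : IsIdealSet A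
  isIdealSet_B : IsIdealSet B
  subset : B ⊆ A
  eq_or_eq : ∀ I : Set S, IsIdealSet I → B ⊆ I → I ⊆ A → I = B ∨ I = A
  not_null : ∃ x ∈ A \ B, ∃ y ∈ A \ B, x * y ∉ B

namespace IsNonNullPrincipalFactor

variable {A B : Set S}

theorem diff_subset_of_isIdealSet (hF : IsNonNullPrincipalFactor A B) {T : Set S}
    (hT : IsIdealSet T) (hTA : T ⊆ A) (hTB : ¬T ⊆ B) : A \ B ⊆ T := by
  rintro y ⟨hyA, hyB⟩
  rcases hF.eq_or_eq _ (hF.isIdealSet_B.union hT) Set.subset_union_left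
      (Set.union_subset hF.subset hTA) with h | h
  · exact absurd (h ▸ Set.subset_union_right) hTB
  · exact (h ▸ hyA : y ∈ B ∪ T).resolve_left hyB

theorem exists_mem_mul_eq (hF : IsNonNullPrincipalFactor A B) {y : S} (hy : y ∈ A \ B) :
    ∃ a ∈ A \ B, ∃ b ∈ A \ B, a * b = y := by
  have hA := hF.isIdealSet_A
  have hsq : IsIdealSet {z | ∃ a ∈ A, ∃ b ∈ A, a * b = z} := by
    rintro s _ ⟨a, ha, b, hb, rfl⟩
    exact ⟨⟨s * a, hA.mul_mem_left s ha, b, hb, mul_assoc s a b⟩,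
      ⟨a, ha, b * s, hA.mul_mem_right hb s, (mul_assoc a b s).symm⟩⟩
  obtain ⟨x₀, hx₀, y₀, hy₀, hxy⟩ := hF.not_null
  obtain ⟨a, ha, b, hb, rfl⟩ := hF.diff_subset_of_isIdealSet hsq
    (by rintro _ ⟨a, -, b, hb, rfl⟩; exact hA.mul_mem_left a hb)
    (fun h => hxy (h ⟨x₀, hx₀.1, y₀, hy₀.1, rfl⟩)) hy
  exact ⟨a, ⟨ha, hF.isIdealSet_B.notMem_of_mul_notMem_left hy.2⟩,
    b, ⟨hb, hF.isIdealSet_B.notMem_of_mul_notMem_right hy.2⟩, rfl⟩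

theorem exists_mul_mul_eq (hF : IsNonNullPrincipalFactor A B) {x y : S} (hx : x ∈ A \ B)
    (hy : y ∈ A \ B) : ∃ s t : S, s * x * t = y := by
  have hA := hF.isIdealSet_A
  have hB := hF.isIdealSet_B
  have hSxS : IsIdealSet {z | ∃ s t : S, s * x * t = z} := by
    rintro u _ ⟨s, t, rfl⟩
    exact ⟨⟨u * s, t, by simp only [mul_assoc]⟩, ⟨s, t * u, by simp only [mul_assoc]⟩⟩
  refine hF.diff_subset_of_isIdealSet hSxS
    (by rintro _ ⟨s, t, rfl⟩; exact hA.mul_mem_right (hA.mul_mem_left s hx.1) t) ?_ hy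
  -- otherwise `x`, hence by minimality every element of `N`, is annihilated by `S _ S`,
  -- contradicting non-nullity
  intro hsub
  have hann : IsIdealSet {a | a ∈ A ∧ ∀ s t : S, s * a * t ∈ B} := by
    rintro u a ⟨ha, hsat⟩
    exact ⟨⟨hA.mul_mem_left u ha, fun s t => by simpa only [mul_assoc] using hsat (s * u) t⟩,
      ⟨hA.mul_mem_right ha u, fun s t => by simpa only [mul_assoc] using hsat s (u * t)⟩⟩
  have hsub' := hF.diff_subset_of_isIdealSet hann (fun _ h => h.1)
    (fun h => hx.2 (h ⟨hx.1, fun s t => hsub ⟨s, t, rfl⟩⟩))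
  obtain ⟨x₀, hx₀, y₀, -, hxy⟩ := hF.not_null
  obtain ⟨a, -, b, hb, rfl⟩ := hF.exists_mem_mul_eq hx₀
  exact hxy ((hsub' hb).2 a y₀)

theorem exists_mem_mul_mul_eq (hF : IsNonNullPrincipalFactor A B) {x y : S} (hx : x ∈ A \ B)
    (hy : y ∈ A \ B) : ∃ u ∈ A \ B, ∃ v ∈ A \ B, u * x * v = y := by
  have hA := hF.isIdealSet_A
  have hB := hF.isIdealSet_B
  obtain ⟨a, ha, w, hw, rfl⟩ := hF.exists_mem_mul_eq hy
  obtain ⟨z, hz, d, hd, rfl⟩ := hF.exists_mem_mul_eq hw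
  obtain ⟨s, t, rfl⟩ := hF.exists_mul_mul_eq hx hz
  have hprod : a * s * x * (t * d) = a * (s * x * t * d) := by simp only [mul_assoc]
  refine ⟨a * s, ⟨hA.mul_mem_right ha.1 s, ?_⟩, t * d, ⟨hA.mul_mem_left t hd.1, ?_⟩,
    hprod⟩
  · exact hB.notMem_of_mul_notMem_left (hB.notMem_of_mul_notMem_left (hprod ▸ hy.2))
  · exact hB.notMem_of_mul_notMem_right (hprod ▸ hy.2)

theorem eq_of_nle [Finite S] (hF : IsNonNullPrincipalFactor A B) {k e : S} (hk : k ∈ A \ B)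
    (he : e ∈ A \ B) (hkk : IsIdempotentElem k) (hke : nle k e) : k = e := by
  obtain ⟨s, t, hst⟩ := hF.exists_mul_mul_eq hk he
  have hsand : e = s * e * (k * t) := by
    calc e = s * (e * k) * t := by rw [hke.2, hst]
      _ = s * e * (k * t) := by simp only [mul_assoc]
  obtain ⟨-, -, f, ⟨c, rfl⟩, -, -, -, hf⟩ := exists_isIdempotentElem_of_eq_mul_mul hsand
    (T := Set.univ) (U := {z | ∃ c, k * c = z}) (fun _ _ _ _ => trivial)
    (by rintro _ ⟨c, rfl⟩ _ ⟨c', rfl⟩; exact ⟨c * (k * c'), by simp only [mul_assoc]⟩)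
    trivial ⟨t, rfl⟩
  have hkc : k * c = e := by rw [← hf, ← mul_assoc, hke.2]
  calc k = k * e := hke.1.symm
    _ = e := by rw [← hkc, ← mul_assoc, hkk.eq]

end IsNonNullPrincipalFactor

end PrincipalFactor

section SingletonRichFactor

variable {S : Type*} [Semigroup S] [Finite S] {A B : Set S} {sa pl : S → S}

namespace IsNonNullPrincipalFactor

theorem sa_mem (hF : IsNonNullPrincipalFactor A B) (hR : IsSingletonRich sa pl) {x : S}
    (hx : x ∈ A \ B) : sa x ∈ A \ B := by
  have hA := hF.isIdealSet_A
  obtain ⟨u, hu, v, hv, huv⟩ := hF.exists_mem_mul_mul_eq hx hx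
  obtain ⟨-, -, f, hfA, -, hf, -, hxf⟩ := exists_isIdempotentElem_of_eq_mul_mul huv.symm
    (fun a _ b hb => hA.mul_mem_left a hb) (fun a _ b hb => hA.mul_mem_left a hb) hu.1 hv.1
  refine ⟨(hR.sa_nle hf hxf).1 ▸ hA.mul_mem_left _ hfA, fun h => hx.2 ?_⟩
  simpa only [hR.mul_sa] using hF.isIdealSet_B.mul_mem_left x h

theorem pl_mem (hF : IsNonNullPrincipalFactor A B) (hR : IsSingletonRich sa pl) {x : S}
    (hx : x ∈ A \ B) : pl x ∈ A \ B := by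
  have hA := hF.isIdealSet_A
  obtain ⟨u, hu, v, hv, huv⟩ := hF.exists_mem_mul_mul_eq hx hx
  obtain ⟨e, heA, -, -, he, -, hex, -⟩ := exists_isIdempotentElem_of_eq_mul_mul huv.symm
    (fun a _ b hb => hA.mul_mem_left a hb) (fun a _ b hb => hA.mul_mem_left a hb) hu.1 hv.1
  refine ⟨(hR.pl_nle he hex).1 ▸ hA.mul_mem_left _ heA, fun h => hx.2 ?_⟩
  simpa only [hR.pl_mul] using hF.isIdealSet_B.mul_mem_right h x

theorem sa_eq_of_mul_eq (hF : IsNonNullPrincipalFactor A B) (hR : IsSingletonRich sa pl)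
    {x e : S} (hx : x ∈ A \ B) (he : e ∈ A \ B) (hee : IsIdempotentElem e) (hxe : x * e = x) :
    sa x = e :=
  hF.eq_of_nle (hF.sa_mem hR hx) he (hR.isIdempotentElem_sa x) (hR.sa_nle hee hxe)

theorem pl_eq_of_mul_eq (hF : IsNonNullPrincipalFactor A B) (hR : IsSingletonRich sa pl)
    {x e : S} (hx : x ∈ A \ B) (he : e ∈ A \ B) (hee : IsIdempotentElem e) (hex : e * x = x) :
    pl x = e :=
  hF.eq_of_nle (hF.pl_mem hR hx) he (hR.isIdempotentElem_pl x) (hR.pl_nle hee hex)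

theorem exists_mul_mul_eq_self (hF : IsNonNullPrincipalFactor A B) (hR : IsSingletonRich sa pl)
    {x : S} (hx : x ∈ A \ B) : ∃ y, x * y * x = x := by
  obtain ⟨u, -, v, -, huv⟩ := hF.exists_mem_mul_mul_eq hx (hF.sa_mem hR hx)
  have hsand : x = x * u * x * v := by
    calc x = x * sa x := (hR.mul_sa x).symm
      _ = x * u * x * v := by rw [← huv]; simp only [mul_assoc]
  obtain ⟨_, ⟨c, rfl⟩, -, -, -, -, hex, -⟩ := exists_isIdempotentElem_of_eq_mul_mul hsand
    (T := {z | ∃ c, x * c = z}) (U := Set.univ)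
    (by rintro _ ⟨c, rfl⟩ _ ⟨c', rfl⟩; exact ⟨c * (x * c'), by simp only [mul_assoc]⟩)
    (fun _ _ _ _ => trivial) ⟨u, rfl⟩ trivial
  exact ⟨c, hex⟩

theorem exists_inverse (hF : IsNonNullPrincipalFactor A B) (hR : IsSingletonRich sa pl)
    {x : S} (hx : x ∈ A \ B) :
    ∃ x' ∈ A \ B, x * x' = pl x ∧ x' * x = sa x ∧ pl x' = sa x ∧ sa x' = pl x := by
  have hA := hF.isIdealSet_A
  have hB := hF.isIdealSet_B
  obtain ⟨y, hy⟩ := hF.exists_mul_mul_eq_self hR hx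
  have hx_ne : x * y * x ∉ B := by rw [hy]; exact hx.2
  have hxy : pl x = x * y := by
    refine hF.pl_eq_of_mul_eq hR hx
      ⟨hA.mul_mem_right hx.1 y, hB.notMem_of_mul_notMem_left hx_ne⟩ ?_ hy
    rw [IsIdempotentElem, ← mul_assoc, hy]
  have hyx : sa x = y * x := by
    refine hF.sa_eq_of_mul_eq hR hx ⟨hA.mul_mem_left y hx.1, ?_⟩ ?_ (by rw [← mul_assoc, hy])
    · exact hB.notMem_of_mul_notMem_right (a := x) (by rwa [← mul_assoc])
    · calc y * x * (y * x) = y * (x * y * x) := by simp only [mul_assoc]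
        _ = y * x := by rw [hy]
  have hx'x : y * x * y * x = y * x := by
    calc y * x * y * x = y * (x * y * x) := by simp only [mul_assoc]
      _ = y * x := by rw [hy]
  have hxx' : x * (y * x * y) = x * y := by
    calc x * (y * x * y) = x * y * x * y := by simp only [mul_assoc]
      _ = x * y := by rw [hy]
  have hx' : y * x * y ∈ A \ B :=
    ⟨hA.mul_mem_right (hA.mul_mem_left y hx.1) y,
      hB.notMem_of_mul_notMem_right (a := x) (by rw [hxx', ← hxy]; exact (hF.pl_mem hR hx).2)⟩
  refine ⟨y * x * y, hx', hxx'.trans hxy.symm, hx'x.trans hyx.symm, ?_, ?_⟩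
  · refine hF.pl_eq_of_mul_eq hR hx' (hF.sa_mem hR hx) (hR.isIdempotentElem_sa x) ?_
    calc sa x * (y * x * y) = y * (x * y * x) * y := by rw [hyx]; simp only [mul_assoc]
      _ = y * x * y := by rw [hy]
  · refine hF.sa_eq_of_mul_eq hR hx' (hF.pl_mem hR hx) (hR.isIdempotentElem_pl x) ?_
    calc y * x * y * pl x = y * (x * y * x) * y := by rw [hxy]; simp only [mul_assoc]
      _ = y * x * y := by rw [hy]

theorem pl_mul_eq (hF : IsNonNullPrincipalFactor A B) (hR : IsSingletonRich sa pl) {x y : S}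
    (hx : x ∈ A \ B) (hxy : x * y ∉ B) : pl (x * y) = pl x :=
  hF.pl_eq_of_mul_eq hR ⟨hF.isIdealSet_A.mul_mem_right hx.1 y, hxy⟩ (hF.pl_mem hR hx)
    (hR.isIdempotentElem_pl x) (by rw [← mul_assoc, hR.pl_mul])

theorem sa_mul_eq (hF : IsNonNullPrincipalFactor A B) (hR : IsSingletonRich sa pl) {x y : S}
    (hy : y ∈ A \ B) (hxy : x * y ∉ B) : sa (x * y) = sa y :=
  hF.sa_eq_of_mul_eq hR ⟨hF.isIdealSet_A.mul_mem_left x hy.1, hxy⟩ (hF.sa_mem hR hy)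
    (hR.isIdempotentElem_sa y) (by rw [mul_assoc, hR.mul_sa])

theorem eq_of_mul_notMem (hF : IsNonNullPrincipalFactor A B) (hR : IsSingletonRich sa pl)
    {m p : S} (hm : m ∈ A \ B) (hp : p ∈ A \ B) (hmm : IsIdempotentElem m)
    (hpp : IsIdempotentElem p) (hmp : m * p ∉ B) : m = p := by
  have hmpN : m * p ∈ A \ B := ⟨hF.isIdealSet_A.mul_mem_left m hp.1, hmp⟩
  obtain ⟨w, -, hw, hw', -, -⟩ := hF.exists_inverse hR hmpN
  rw [hF.pl_eq_of_mul_eq hR hmpN hm hmm (by rw [← mul_assoc, hmm.eq])] at hw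
  rw [hF.sa_eq_of_mul_eq hR hmpN hp hpp (by rw [mul_assoc, hpp.eq])] at hw'
  -- `g = p * w * m` is idempotent with `g * m = g` and `g * p = p`; the idempotent laws of a
  -- singleton-rich semigroup turn these into `m * g = g` and `p * g = p`, forcing `m = g = p`
  have hg : IsIdempotentElem (p * w * m) := by
    calc p * w * m * (p * w * m) = p * w * (m * p * w) * m := by simp only [mul_assoc]
      _ = p * w * m := by rw [hw, mul_assoc (p * w), hmm.eq]
  have hgm : p * w * m * m = p * w * m := by rw [mul_assoc, hmm.eq]
  have hgp : p * w * m * p = p := by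
    calc p * w * m * p = p * (w * (m * p)) := by simp only [mul_assoc]
      _ = p := by rw [hw', hpp.eq]
  calc m = m * p * w * m := by rw [hw, hmm.eq]
    _ = m * (p * w * m) := by simp only [mul_assoc]
    _ = p * w * m := hR.mul_eq_right_of_mul_eq_left hg hmm hgm
    _ = p * p * w * m := by rw [hpp.eq]
    _ = p * (p * w * m) := by simp only [mul_assoc]
    _ = p := hR.mul_eq_left_of_mul_eq_right hg hpp hgp

theorem mul_notMem_iff (hF : IsNonNullPrincipalFactor A B) (hR : IsSingletonRich sa pl)
    {x y : S} (hx : x ∈ A \ B) (hy : y ∈ A \ B) : x * y ∉ B ↔ sa x = pl y := by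
  have hB := hF.isIdealSet_B
  constructor
  · intro hxy
    refine hF.eq_of_mul_notMem hR (hF.sa_mem hR hx) (hF.pl_mem hR hy) (hR.isIdempotentElem_sa x)
      (hR.isIdempotentElem_pl y) (hB.notMem_of_mul_notMem_left (b := y)
        (hB.notMem_of_mul_notMem_right (a := x) ?_))
    rwa [← mul_assoc, ← mul_assoc, hR.mul_sa, mul_assoc, hR.pl_mul]
  · intro h hxy
    obtain ⟨x', -, -, hx'x, -, -⟩ := hF.exists_inverse hR hx
    refine hy.2 ?_
    simpa only [← mul_assoc, hx'x, h, hR.pl_mul] using hB.mul_mem_left x' hxy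

theorem mul_mem_of_sa_eq_pl (hF : IsNonNullPrincipalFactor A B) (hR : IsSingletonRich sa pl)
    {x y : S} (hx : x ∈ A \ B) (hy : y ∈ A \ B) (h : sa x = pl y) :
    x * y ∈ A \ B ∧ pl (x * y) = pl x ∧ sa (x * y) = sa y := by
  have hxy := (hF.mul_notMem_iff hR hx hy).2 h
  exact ⟨⟨hF.isIdealSet_A.mul_mem_right hx.1 y, hxy⟩, hF.pl_mul_eq hR hx hxy,
    hF.sa_mul_eq hR hy hxy⟩

theorem exists_pl_sa_eq (hF : IsNonNullPrincipalFactor A B) (hR : IsSingletonRich sa pl)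
    {e f : S} (he : e ∈ A \ B) (hf : f ∈ A \ B) (hee : IsIdempotentElem e)
    (hff : IsIdempotentElem f) : ∃ r ∈ A \ B, pl r = e ∧ sa r = f := by
  have hA := hF.isIdealSet_A
  obtain ⟨u, -, v, -, huv⟩ := hF.exists_mem_mul_mul_eq he hf
  have hur : u * (e * v * f) = f := by
    calc u * (e * v * f) = u * e * v * f := by simp only [mul_assoc]
      _ = f := by rw [huv, hff.eq]
  have hr : e * v * f ∈ A \ B :=
    ⟨hA.mul_mem_right (hA.mul_mem_right he.1 v) f,
      hF.isIdealSet_B.notMem_of_mul_notMem_right (hur ▸ hf.2)⟩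
  refine ⟨e * v * f, hr, hF.pl_eq_of_mul_eq hR hr he hee ?_,
    hF.sa_eq_of_mul_eq hR hr hf hff ?_⟩
  · simp only [← mul_assoc, hee.eq]
  · rw [mul_assoc, hff.eq]

end IsNonNullPrincipalFactor

end SingletonRichFactor

/-- `φ` identifies the nonzero elements of a multiplication `m` on `Option P`, whose zero is
`none`, with Brandt triples `(i, g, j)`. -/
def IsBrandtCoords {P ι G : Type*} [Mul G] (m : Option P → Option P → Option P)
    (φ : P ≃ ι × G × ι) : Prop :=
  (∀ x, m none x = none ∧ m x none = none) ∧
    ∀ a b, (m (some a) (some b)).map φ =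
      if (φ a).2.2 = (φ b).1 then some ((φ a).1, (φ a).2.1 * (φ b).2.1, (φ b).2.2) else none

theorem IsBrandtCoords.exists_brandtMul_iso {P ι G : Type*} [Finite ι] [Group G] [Finite G]
    {m : Option P → Option P → Option P} {φ : P ≃ ι × G × ι} (h : IsBrandtCoords m φ) :
    ∃ (n : ℕ) (G' : Type) (_ : Group G') (_ : Fintype G')
      (e : Option P ≃ Option (Fin n × G' × Fin n)),
      ∀ x y, e (m x y) = brandtMul (e x) (e y) := by
  let ψ := Finite.equivFin ι
  let χ : G ≃* Shrink.{0} G := Shrink.mulEquiv.symm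
  let Φ := φ.trans (ψ.prodCongr (χ.toEquiv.prodCongr ψ))
  refine ⟨Nat.card ι, Shrink.{0} G, inferInstance, Fintype.ofFinite _, Φ.optionCongr, ?_⟩
  rintro (_ | a) (_ | b)
  · rw [(h.1 none).1]; rfl
  · rw [(h.1 _).1]; rfl
  · rw [(h.1 _).2]; rfl
  · have hab := congrArg (Option.map (ψ.prodCongr (χ.toEquiv.prodCongr ψ))) (h.2 a b)
    rw [Option.map_map] at hab
    rw [Equiv.optionCongr_apply, Equiv.optionCongr_apply, Equiv.optionCongr_apply,
      Option.map_some, Option.map_some]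
    refine hab.trans ?_
    simp only [brandtMul, Φ, Equiv.trans_apply, Equiv.prodCongr_apply, Prod.map,
      ψ.injective.eq_iff]
    split_ifs <;> simp [χ, map_mul]

section Coordinates

variable {S : Type*} [Semigroup S] {A B : Set S} {sa pl : S → S} {e₀ : S} {r r' : S → S}

def maxSubgroup (sa pl : S → S) (A B : Set S) (e₀ : S) : Set S :=
  {g | g ∈ A \ B ∧ pl g = e₀ ∧ sa g = e₀}

/-- `r e` and `r' e` are mutually inverse elements of the 𝓗-classes `R_e ∩ L_{e₀}` and
`R_{e₀} ∩ L_e`, for every nonzero idempotent `e`. -/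
def IsTransversal (sa pl : S → S) (A B : Set S) (e₀ : S) (r r' : S → S) : Prop :=
  ∀ e ∈ A \ B, IsIdempotentElem e →
    r e ∈ A \ B ∧ r' e ∈ A \ B ∧ pl (r e) = e ∧ sa (r e) = e₀ ∧ pl (r' e) = e₀ ∧
      sa (r' e) = e ∧ r e * r' e = e ∧ r' e * r e = e₀

theorem IsTransversal.mid_mul_mul (hT : IsTransversal sa pl A B e₀ r r')
    (hR : IsSingletonRich sa pl) {e g f : S} (he : e ∈ A \ B) (hee : IsIdempotentElem e)
    (hg : g ∈ maxSubgroup sa pl A B e₀) (hf : f ∈ A \ B) (hff : IsIdempotentElem f) :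
    r' e * (r e * g * r' f) * r f = g := by
  obtain ⟨-, -, -, -, -, -, -, he₀⟩ := hT e he hee
  obtain ⟨-, -, -, -, -, -, -, hf₀⟩ := hT f hf hff
  have hleft : e₀ * g = g := by rw [← hg.2.1]; exact hR.pl_mul g
  have hright : g * e₀ = g := by rw [← hg.2.2]; exact hR.mul_sa g
  calc r' e * (r e * g * r' f) * r f = r' e * r e * g * (r' f * r f) := by simp only [mul_assoc]
    _ = g := by rw [he₀, hf₀, hleft, hright]

variable [Finite S]

theorem IsNonNullPrincipalFactor.mul_mem_maxSubgroup (hF : IsNonNullPrincipalFactor A B)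
    (hR : IsSingletonRich sa pl) {g h : S} (hg : g ∈ maxSubgroup sa pl A B e₀)
    (hh : h ∈ maxSubgroup sa pl A B e₀) : g * h ∈ maxSubgroup sa pl A B e₀ :=
  have ⟨hgh, hpl, hsa⟩ := hF.mul_mem_of_sa_eq_pl hR hg.1 hh.1 (hg.2.2.trans hh.2.1.symm)
  ⟨hgh, hpl.trans hg.2.1, hsa.trans hh.2.2⟩

theorem IsNonNullPrincipalFactor.exists_inverse_mem_maxSubgroup
    (hF : IsNonNullPrincipalFactor A B) (hR : IsSingletonRich sa pl) {g : S}
    (hg : g ∈ maxSubgroup sa pl A B e₀) :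
    ∃ g' ∈ maxSubgroup sa pl A B e₀, g' * g = e₀ := by
  obtain ⟨g', hg', -, hg'g, hplg', hsag'⟩ := hF.exists_inverse hR hg.1
  exact ⟨g', ⟨hg', hplg'.trans hg.2.2, hsag'.trans hg.2.1⟩, hg'g.trans hg.2.2⟩

@[reducible]
noncomputable def IsNonNullPrincipalFactor.maxSubgroupGroup (hF : IsNonNullPrincipalFactor A B)
    (hR : IsSingletonRich sa pl) (he₀ : e₀ ∈ A \ B) (he₀' : IsIdempotentElem e₀) :
    Group (maxSubgroup sa pl A B e₀) :=
  let _ : Mul (maxSubgroup sa pl A B e₀) :=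
    ⟨fun g h => ⟨g * h, hF.mul_mem_maxSubgroup hR g.2 h.2⟩⟩
  let _ : One (maxSubgroup sa pl A B e₀) :=
    ⟨⟨e₀, he₀, hR.pl_eq_self he₀', hR.sa_eq_self he₀'⟩⟩
  let _ : Inv (maxSubgroup sa pl A B e₀) :=
    ⟨fun g => ⟨_, (hF.exists_inverse_mem_maxSubgroup hR g.2).choose_spec.1⟩⟩
  Group.ofLeftAxioms (fun _ _ _ => Subtype.ext (mul_assoc _ _ _))
    (fun g => Subtype.ext ((congrArg (· * g.1) g.2.2.1).symm.trans (hR.pl_mul g.1)))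
    (fun g => Subtype.ext (hF.exists_inverse_mem_maxSubgroup hR g.2).choose_spec.2)

theorem IsNonNullPrincipalFactor.exists_isTransversal (hF : IsNonNullPrincipalFactor A B)
    (hR : IsSingletonRich sa pl) (he₀ : e₀ ∈ A \ B) (he₀' : IsIdempotentElem e₀) :
    ∃ r r' : S → S, IsTransversal sa pl A B e₀ r r' := by
  have h : ∀ e ∈ A \ B, IsIdempotentElem e → ∃ r r' : S, r ∈ A \ B ∧ r' ∈ A \ B ∧
      pl r = e ∧ sa r = e₀ ∧ pl r' = e₀ ∧ sa r' = e ∧ r * r' = e ∧ r' * r = e₀ := by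
    intro e he hee
    obtain ⟨r, hr, hplr, hsar⟩ := hF.exists_pl_sa_eq hR he he₀ hee he₀'
    obtain ⟨r', hr', hrr', hr'r, hplr', hsar'⟩ := hF.exists_inverse hR hr
    exact ⟨r, r', hr, hr', hplr, hsar, hplr'.trans hsar, hsar'.trans hplr, hrr'.trans hplr,
      hr'r.trans hsar⟩
  choose! r r' hr using h
  exact ⟨r, r', hr⟩

namespace IsTransversal

theorem mid_mem (hT : IsTransversal sa pl A B e₀ r r') (hF : IsNonNullPrincipalFactor A B)
    (hR : IsSingletonRich sa pl) {x : S} (hx : x ∈ A \ B) :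
    r' (pl x) * x * r (sa x) ∈ maxSubgroup sa pl A B e₀ := by
  obtain ⟨-, hr', -, -, hplr', hsar', -⟩ := hT _ (hF.pl_mem hR hx) (hR.isIdempotentElem_pl x)
  obtain ⟨hr, -, hplr, hsar, -⟩ := hT _ (hF.sa_mem hR hx) (hR.isIdempotentElem_sa x)
  obtain ⟨h₁, hpl₁, hsa₁⟩ := hF.mul_mem_of_sa_eq_pl hR hr' hx hsar'
  obtain ⟨h₂, hpl₂, hsa₂⟩ := hF.mul_mem_of_sa_eq_pl hR h₁ hr (hsa₁.trans hplr.symm)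
  exact ⟨h₂, hpl₂.trans (hpl₁.trans hplr'), hsa₂.trans hsar⟩

theorem mul_mid_mul (hT : IsTransversal sa pl A B e₀ r r') (hF : IsNonNullPrincipalFactor A B)
    (hR : IsSingletonRich sa pl) {x : S} (hx : x ∈ A \ B) :
    r (pl x) * (r' (pl x) * x * r (sa x)) * r' (sa x) = x := by
  obtain ⟨-, -, -, -, -, -, hpl, -⟩ := hT _ (hF.pl_mem hR hx) (hR.isIdempotentElem_pl x)
  obtain ⟨-, -, -, -, -, -, hsa, -⟩ := hT _ (hF.sa_mem hR hx) (hR.isIdempotentElem_sa x)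
  calc r (pl x) * (r' (pl x) * x * r (sa x)) * r' (sa x)
      = r (pl x) * r' (pl x) * x * (r (sa x) * r' (sa x)) := by simp only [mul_assoc]
    _ = x := by rw [hpl, hsa, hR.pl_mul, hR.mul_sa]

theorem mul_mul_mem (hT : IsTransversal sa pl A B e₀ r r') (hF : IsNonNullPrincipalFactor A B)
    (hR : IsSingletonRich sa pl) {e g f : S} (he : e ∈ A \ B) (hee : IsIdempotentElem e)
    (hg : g ∈ maxSubgroup sa pl A B e₀) (hf : f ∈ A \ B) (hff : IsIdempotentElem f) :
    r e * g * r' f ∈ A \ B ∧ pl (r e * g * r' f) = e ∧ sa (r e * g * r' f) = f := by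
  obtain ⟨hr, -, hplr, hsar, -⟩ := hT e he hee
  obtain ⟨-, hr', -, -, hplr', hsar', -⟩ := hT f hf hff
  obtain ⟨h₁, hpl₁, hsa₁⟩ := hF.mul_mem_of_sa_eq_pl hR hr hg.1 (hsar.trans hg.2.1.symm)
  obtain ⟨h₂, hpl₂, hsa₂⟩ :=
    hF.mul_mem_of_sa_eq_pl hR h₁ hr' (hsa₁.trans (hg.2.2.trans hplr'.symm))
  exact ⟨h₂, hpl₂.trans (hpl₁.trans hplr), hsa₂.trans hsar'⟩

theorem mid_mul (hT : IsTransversal sa pl A B e₀ r r') (hF : IsNonNullPrincipalFactor A B)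
    (hR : IsSingletonRich sa pl) {x y : S} (hx : x ∈ A \ B) (hy : y ∈ A \ B)
    (h : sa x = pl y) :
    r' (pl (x * y)) * (x * y) * r (sa (x * y)) =
      r' (pl x) * x * r (sa x) * (r' (pl y) * y * r (sa y)) := by
  obtain ⟨-, hpl, hsa⟩ := hF.mul_mem_of_sa_eq_pl hR hx hy h
  obtain ⟨-, -, -, -, -, -, hrr', -⟩ := hT _ (hF.pl_mem hR hy) (hR.isIdempotentElem_pl y)
  calc r' (pl (x * y)) * (x * y) * r (sa (x * y))
      = r' (pl x) * (x * pl y) * y * r (sa y) := by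
        rw [hpl, hsa, ← h, hR.mul_sa]; simp only [mul_assoc]
    _ = r' (pl x) * (x * (r (pl y) * r' (pl y))) * y * r (sa y) := by rw [hrr']
    _ = r' (pl x) * x * r (sa x) * (r' (pl y) * y * r (sa y)) := by
      rw [h]; simp only [mul_assoc]

noncomputable def coordEquiv (hT : IsTransversal sa pl A B e₀ r r')
    (hF : IsNonNullPrincipalFactor A B) (hR : IsSingletonRich sa pl) :
    {x // x ∈ A \ B} ≃
      {e // e ∈ A \ B ∧ IsIdempotentElem e} × maxSubgroup sa pl A B e₀ ×
        {e // e ∈ A \ B ∧ IsIdempotentElem e} where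
  toFun x := (⟨pl x, hF.pl_mem hR x.2, hR.isIdempotentElem_pl x⟩, ⟨_, hT.mid_mem hF hR x.2⟩,
    ⟨sa x, hF.sa_mem hR x.2, hR.isIdempotentElem_sa x⟩)
  invFun p := ⟨r p.1 * p.2.1 * r' p.2.2,
    (hT.mul_mul_mem hF hR p.1.2.1 p.1.2.2 p.2.1.2 p.2.2.2.1 p.2.2.2.2).1⟩
  left_inv x := Subtype.ext (hT.mul_mid_mul hF hR x.2)
  right_inv := by
    rintro ⟨⟨e, he, hee⟩, ⟨g, hg⟩, ⟨f, hf, hff⟩⟩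
    obtain ⟨-, hpl, hsa⟩ := hT.mul_mul_mem hF hR he hee hg hf hff
    simp only [hpl, hsa, hT.mid_mul_mul hR he hee hg hf hff]

theorem isBrandtCoords (hT : IsTransversal sa pl A B e₀ r r') (hF : IsNonNullPrincipalFactor A B)
    (hR : IsSingletonRich sa pl) [Mul (maxSubgroup sa pl A B e₀)]
    (hmul : ∀ g h : maxSubgroup sa pl A B e₀,
      ((g * h : maxSubgroup sa pl A B e₀) : S) = g * h) :
    IsBrandtCoords (facMul A B) (hT.coordEquiv hF hR) := by
  refine ⟨fun x => ⟨rfl, by cases x <;> rfl⟩, fun a b => ?_⟩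
  by_cases h : sa a = pl b
  · obtain ⟨hab, hpl, hsa⟩ := hF.mul_mem_of_sa_eq_pl hR a.2 b.2 h
    rw [facMul, dif_pos hab, if_pos (Subtype.ext h), Option.map_some]
    simp only [coordEquiv, Equiv.coe_fn_mk, hpl, hsa, Option.some.injEq, Prod.mk.injEq,
      true_and, and_true]
    apply Subtype.ext
    rw [hmul, ← hT.mid_mul hF hR a.2 b.2 h]
    simp only [hpl, hsa]
  · have hab : a.1 * b.1 ∉ A \ B := fun hab => h ((hF.mul_notMem_iff hR a.2 b.2).1 hab.2)
    rw [facMul, dif_neg hab, if_neg (fun h' => h (congrArg Subtype.val h')), Option.map_none]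

end IsTransversal

end Coordinates

theorem stmt11_general {S : Type*} [Semigroup S] [Fintype S] (sa pl : S → S)
    (hsa : ∀ s : S, IsKer (Subsemigroup.closure (rIds s)) (sa s))
    (hpl : ∀ s : S, IsKer (Subsemigroup.closure (lIds s)) (pl s))
    (l : ℕ) (A : ℕ → Set S)
    (hIdeal : ∀ i ≤ l + 1, IsIdealSet (A i))
    (hChain : ∀ i ≤ l, A (i + 1) ⊂ A i)
    (hMax : ∀ i ≤ l, ∀ I : Set S, IsIdealSet I → A (i + 1) ⊆ I → I ⊆ A i →
      I = A (i + 1) ∨ I = A i)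
    (i : ℕ) (hi : i ≤ l)
    (hNotNull : ∃ x ∈ A i \ A (i + 1), ∃ y ∈ A i \ A (i + 1), x * y ∉ A (i + 1)) :
    ∃ (n : ℕ) (G : Type) (_ : Group G) (_ : Fintype G)
      (e : Option {x : S // x ∈ A i \ A (i + 1)} ≃ Option (Fin n × G × Fin n)),
      ∀ x y, e (facMul (A i) (A (i + 1)) x y) = brandtMul (e x) (e y) := by
  have hF : IsNonNullPrincipalFactor (A i) (A (i + 1)) :=
    ⟨hIdeal i (by omega), hIdeal (i + 1) (by omega), (hChain i hi).subset, hMax i hi, hNotNull⟩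
  have hR : IsSingletonRich sa pl := ⟨hsa, hpl⟩
  obtain ⟨x₀, hx₀, -⟩ := hNotNull
  have he₀ := hF.sa_mem hR hx₀
  have he₀' := hR.isIdempotentElem_sa x₀
  obtain ⟨r, r', hT⟩ := hF.exists_isTransversal hR he₀ he₀'
  let _ := hF.maxSubgroupGroup hR he₀ he₀'
  exact (hT.isBrandtCoords hF hR fun _ _ => rfl).exists_brandtMul_iso

/-- In a finite singleton-rich semigroup with a principal series
`S = A 0 ⊋ A 1 ⊋ ⋯ ⊋ A l ⊋ A (l+1) = ∅`, every non-null principal factor `A i / A (i+1)`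
is isomorphic (as a multiplicative structure) to a Brandt semigroup `ℬₙ(G)` over a finite
group `G`; in particular it is an inverse completely 0-simple semigroup or a group. -/
theorem stmt11 {S : Type*} [Semigroup S] [Fintype S] (sa pl : S → S)
    (hsa : ∀ s : S, IsKer (Subsemigroup.closure (rIds s)) (sa s))
    (hpl : ∀ s : S, IsKer (Subsemigroup.closure (lIds s)) (pl s))
    (l : ℕ) (A : ℕ → Set S)
    (hA0 : A 0 = Set.univ) (hAtop : A (l + 1) = ∅)
    (hIdeal : ∀ i ≤ l + 1, IsIdealSet (A i))
    (hChain : ∀ i ≤ l, A (i + 1) ⊂ A i)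
    (hMax : ∀ i ≤ l, ∀ I : Set S, IsIdealSet I → A (i + 1) ⊆ I → I ⊆ A i →
      I = A (i + 1) ∨ I = A i)
    (i : ℕ) (hi : i ≤ l)
    (hNotNull : ∃ x ∈ A i \ A (i + 1), ∃ y ∈ A i \ A (i + 1), x * y ∉ A (i + 1)) :
    ∃ (n : ℕ) (G : Type) (_ : Group G) (_ : Fintype G)
      (e : Option {x : S // x ∈ A i \ A (i + 1)} ≃ Option (Fin n × G × Fin n)),
      ∀ x y, e (facMul (A i) (A (i + 1)) x y) = brandtMul (e x) (e y) :=
  stmt11_general sa pl hsa hpl l A hIdeal hChain hMax i hi hNotNull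
end

section
/- Let S be a finite singleton-rich semigroup and s, t ∈ S. Then (s φ^{(s,t)})* = (φ^{(s,t)} t)⁺ = φ^{(s,t)} and (s ψ^{(s,t)})* = (ψ^{(s,t)} t)⁺ = ψ^{(s,t)}. Consequently φ^{(s φ^{(s,t)}, φ^{(s,t)} t)} = φ^{(s,t)} and ψ^{(s ψ^{(s,t)}, ψ^{(s,t)} t)} = ψ^{(s,t)}. -/
open scoped Classical

/-- `e` is the stable (eventual) value `φ^{(s,t)}` of the sequence `φ(s^φ_i, t^φ_i)`. -/
def IsPhiLim {S : Type*} [Mul S] (sa pl : S → S) (s t e : S) : Prop :=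
  ∃ N : ℕ, ∀ i ≥ N, phiF sa pl (phiSeq sa pl s t i).1 (phiSeq sa pl s t i).2 = e

/-- `e` is the stable (eventual) value `ψ^{(s,t)}` of the sequence `ψ(s^ψ_i, t^ψ_i)`. -/
def IsPsiLim {S : Type*} [Mul S] (sa pl : S → S) (s t e : S) : Prop :=
  ∃ N : ℕ, ∀ i ≥ N, psiF sa pl (psiSeq sa pl s t i).1 (psiSeq sa pl s t i).2 = e

/-! The idempotents `Fᵢ = φ(sᵢ, tᵢ)` of the φ-sequence decrease in the natural order: `Fᵢ` is an
idempotent right identity of `sᵢ₊₁ = sᵢ Fᵢ`, so `sᵢ₊₁* ≤ Fᵢ`, and then `Fᵢ` is a left identity of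
`sᵢ₊₁* tᵢ₊₁`, whence `Fᵢ₊₁ ≤ Fᵢ`. Hence the stable value `e` lies below every `Fᵢ` (and every
`sᵢ*`), which gives `sᵢ e = s e` and `e tᵢ = e t` for all `i`. Since `x*` and `x⁺` are the least
idempotent right and left identities of `x`, reading off the sequence once it has stabilised
yields `(s e)* = e = (e t)⁺`, and then `(s e, e t)` is a fixed point of the φ-sequence. The
ψ-sequence is the φ-sequence of the opposite semigroup, with `*` and `⁺` exchanged. -/

open MulOpposite

section NaturalOrder

variable {S : Type*} [Semigroup S] {a b c : S}

lemma nle_trans (hab : nle a b) (hbc : nle b c) : nle a c :=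
  ⟨by rw [← hab.1, mul_assoc, hbc.1], by rw [← hab.2, ← mul_assoc, hbc.2]⟩

lemma nle_antisymm (hab : nle a b) (hba : nle b a) : a = b :=
  hab.1.symm.trans hba.2

lemma nle_of_le_of_forall_nle_succ {F : ℕ → S} (hF : ∀ i, F i * F i = F i)
    (h : ∀ i, nle (F (i + 1)) (F i)) {i j : ℕ} (hij : i ≤ j) : nle (F j) (F i) := by
  induction j, hij using Nat.le_induction with
  | base => exact ⟨hF i, hF i⟩
  | succ j _ ih => exact nle_trans (h j) ih

lemma nle_op_iff : nle (op a) (op b) ↔ nle a b := by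
  simp only [nle, ← op_mul, op_inj, and_comm]

end NaturalOrder

def IsMinRightId {S : Type*} [Mul S] (x e : S) : Prop := e ∈ rIds x ∧ ∀ f ∈ rIds x, nle e f

def IsMinLeftId {S : Type*} [Mul S] (x e : S) : Prop := e ∈ lIds x ∧ ∀ f ∈ lIds x, nle e f

section MinIds

variable {S : Type*} [Semigroup S]

lemma isMinRightId_of_isKer {x e : S} (h : IsKer (Subsemigroup.closure (rIds x)) e) :
    IsMinRightId x e := by
  have hright : ∀ a ∈ Subsemigroup.closure (rIds x), x * a = x := fun a ha => by
    induction ha using Subsemigroup.closure_induction with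
    | mem a ha => exact ha.2
    | mul a b _ _ ha hb => rw [← mul_assoc, ha, hb]
  exact ⟨⟨(h.2 e h.1).1, hright e h.1⟩,
    fun f hf => (h.2 f (Subsemigroup.subset_closure hf)).symm⟩

lemma isMinLeftId_of_isKer {x e : S} (h : IsKer (Subsemigroup.closure (lIds x)) e) :
    IsMinLeftId x e := by
  have hleft : ∀ a ∈ Subsemigroup.closure (lIds x), a * x = x := fun a ha => by
    induction ha using Subsemigroup.closure_induction with
    | mem a ha => exact ha.2
    | mul a b _ _ ha hb => rw [mul_assoc, hb, ha]
  exact ⟨⟨(h.2 e h.1).1, hleft e h.1⟩,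
    fun f hf => (h.2 f (Subsemigroup.subset_closure hf)).symm⟩

lemma isMinRightId_op_iff {x e : S} : IsMinRightId (op x) (op e) ↔ IsMinLeftId x e := by
  simp only [IsMinRightId, IsMinLeftId, rIds, lIds, MulOpposite.forall, Set.mem_ofPred_eq,
    ← op_mul, op_inj, nle_op_iff]

lemma isMinLeftId_op_iff {x e : S} : IsMinLeftId (op x) (op e) ↔ IsMinRightId x e := by
  simp only [IsMinRightId, IsMinLeftId, rIds, lIds, MulOpposite.forall, Set.mem_ofPred_eq,
    ← op_mul, op_inj, nle_op_iff]

end MinIds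

section Limits

variable {S : Type*} [Semigroup S] {sa pl : S → S}

lemma phiF_nle_sa (hsa : ∀ x, IsMinRightId x (sa x)) (hpl : ∀ x, IsMinLeftId x (pl x))
    (x y : S) : nle (phiF sa pl x y) (sa x) :=
  (hpl _).2 _ ⟨(hsa x).1.1, by rw [← mul_assoc, (hsa x).1.1]⟩

lemma phiF_phiSeq_succ_nle (hsa : ∀ x, IsMinRightId x (sa x))
    (hpl : ∀ x, IsMinLeftId x (pl x)) (s t : S) (i : ℕ) :
    nle (phiF sa pl (phiSeq sa pl s t (i + 1)).1 (phiSeq sa pl s t (i + 1)).2)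
      (phiF sa pl (phiSeq sa pl s t i).1 (phiSeq sa pl s t i).2) := by
  set f := phiF sa pl (phiSeq sa pl s t i).1 (phiSeq sa pl s t i).2
  have hf : f * f = f := (hpl _).1.1
  have hsa_le : nle (sa (phiSeq sa pl s t (i + 1)).1) f :=
    (hsa _).2 _ ⟨hf, by rw [phiSeq, mul_assoc, hf]⟩
  exact (hpl _).2 _ ⟨hf, by rw [← mul_assoc, hsa_le.2]⟩

theorem IsPhiLim.sa_mul_eq_and_pl_mul_eq (hsa : ∀ x, IsMinRightId x (sa x))
    (hpl : ∀ x, IsMinLeftId x (pl x)) {s t e : S} (he : IsPhiLim sa pl s t e) :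
    sa (s * e) = e ∧ pl (e * t) = e := by
  obtain ⟨N, hN⟩ := he
  set q := phiSeq sa pl s t
  set F : ℕ → S := fun i => phiF sa pl (q i).1 (q i).2
  have hN : ∀ i ≥ N, F i = e := hN
  have hq₁ : ∀ i, (q (i + 1)).1 = (q i).1 * F i := fun _ => rfl
  have hq₂ : ∀ i, (q (i + 1)).2 = sa (q i).1 * (q i).2 := fun _ => rfl
  have hF_idem : ∀ i, F i * F i = F i := fun i => (hpl _).1.1
  have hF_le_sa : ∀ i, nle (F i) (sa (q i).1) := fun i => phiF_nle_sa hsa hpl _ _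
  have he_le : ∀ i, nle e (F i) := fun i => hN (max i N) (le_max_right i N) ▸
    nle_of_le_of_forall_nle_succ hF_idem (phiF_phiSeq_succ_nle hsa hpl s t) (le_max_left i N)
  have he_idem : e * e = e := hN N le_rfl ▸ hF_idem N
  have hq₁_mul_e : ∀ i, (q i).1 * e = s * e := fun i => by
    induction i with
    | zero => rfl
    | succ i ih => rw [hq₁, mul_assoc, (he_le i).2, ih]
  have he_mul_q₂ : ∀ i, e * (q i).2 = e * t := fun i => by
    induction i with
    | zero => rfl
    | succ i ih => rw [hq₂, ← mul_assoc, (nle_trans (he_le i) (hF_le_sa i)).1, ih]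
  constructor
  · have hsa_le : nle (sa (s * e)) e := (hsa _).2 e ⟨he_idem, by rw [mul_assoc, he_idem]⟩
    have hle_sa : nle e (sa (s * e)) := by
      have h := hF_le_sa (N + 1)
      rwa [hN (N + 1) (by omega), hq₁, hN N le_rfl, hq₁_mul_e] at h
    exact nle_antisymm hsa_le hle_sa
  · -- `u⁺ = F (N + 1) = e`, so `u = u⁺ u = e t`
    set u := (q (N + 2)).2
    have hpl_u : pl u = e := hN (N + 1) (by omega)
    have hu : u = e * t := by rw [← he_mul_q₂ (N + 2), ← hpl_u, (hpl u).1.2]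
    rwa [hu] at hpl_u

lemma phiSeq_eq_self_of_sa_eq_pl (hsa : ∀ x, IsMinRightId x (sa x))
    (hpl : ∀ x, IsMinLeftId x (pl x)) {s t : S} (h : sa s = pl t) (i : ℕ) :
    phiSeq sa pl s t i = (s, t) := by
  have hphiF : phiF sa pl s t = pl t := by
    rw [phiF, h, (hpl t).1.2]
  induction i with
  | zero => rfl
  | succ i ih =>
    rw [phiSeq, ih]
    dsimp only
    rw [hphiF, ← h, (hsa s).1.2, h, (hpl t).1.2]

lemma IsPhiLim.eq_pl_of_sa_eq_pl (hsa : ∀ x, IsMinRightId x (sa x))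
    (hpl : ∀ x, IsMinLeftId x (pl x)) {s t e : S} (he : IsPhiLim sa pl s t e)
    (h : sa s = pl t) : e = pl t := by
  obtain ⟨N, hN⟩ := he
  rw [← hN N le_rfl, phiSeq_eq_self_of_sa_eq_pl hsa hpl h, phiF, h, (hpl t).1.2]

end Limits

lemma phiSeq_op_eq_psiSeq {S : Type*} [Mul S] (sa pl : S → S) (s t : S) (i : ℕ) :
    phiSeq (fun x => op (pl x.unop)) (fun x => op (sa x.unop)) (op t) (op s) i =
      (op (psiSeq sa pl s t i).2, op (psiSeq sa pl s t i).1) := by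
  induction i with
  | zero => rfl
  | succ i ih => simp only [phiSeq, psiSeq, ih, phiF, psiF, unop_op, ← op_mul]

lemma isPsiLim_iff_isPhiLim_op {S : Type*} [Mul S] {sa pl : S → S} {s t e : S} :
    IsPsiLim sa pl s t e ↔
      IsPhiLim (fun x => op (pl x.unop)) (fun x => op (sa x.unop)) (op t) (op s) (op e) := by
  simp only [IsPsiLim, IsPhiLim, phiSeq_op_eq_psiSeq, phiF, psiF, unop_op, ← op_mul, op_inj]

section Duality

variable {S : Type*} [Semigroup S] {sa pl : S → S}

lemma forall_isMinRightId_op (hpl : ∀ x, IsMinLeftId x (pl x)) (x : Sᵐᵒᵖ) :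
    IsMinRightId x (op (pl x.unop)) :=
  isMinRightId_op_iff.2 (hpl x.unop)

lemma forall_isMinLeftId_op (hsa : ∀ x, IsMinRightId x (sa x)) (x : Sᵐᵒᵖ) :
    IsMinLeftId x (op (sa x.unop)) :=
  isMinLeftId_op_iff.2 (hsa x.unop)

theorem IsPsiLim.sa_mul_eq_and_pl_mul_eq (hsa : ∀ x, IsMinRightId x (sa x))
    (hpl : ∀ x, IsMinLeftId x (pl x)) {s t e : S} (he : IsPsiLim sa pl s t e) :
    sa (s * e) = e ∧ pl (e * t) = e := by
  obtain ⟨h₁, h₂⟩ := (isPsiLim_iff_isPhiLim_op.1 he).sa_mul_eq_and_pl_mul_eq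
    (forall_isMinRightId_op hpl) (forall_isMinLeftId_op hsa)
  exact ⟨op_injective h₂, op_injective h₁⟩

lemma IsPsiLim.eq_sa_of_sa_eq_pl (hsa : ∀ x, IsMinRightId x (sa x))
    (hpl : ∀ x, IsMinLeftId x (pl x)) {s t e : S} (he : IsPsiLim sa pl s t e)
    (h : sa s = pl t) : e = sa s :=
  op_injective <| (isPsiLim_iff_isPhiLim_op.1 he).eq_pl_of_sa_eq_pl
    (forall_isMinRightId_op hpl) (forall_isMinLeftId_op hsa) (congrArg op h.symm)

end Duality

theorem stmt14_general {S : Type*} [Semigroup S] (sa pl : S → S)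
    (hsa : ∀ s : S, IsKer (Subsemigroup.closure (rIds s)) (sa s))
    (hpl : ∀ s : S, IsKer (Subsemigroup.closure (lIds s)) (pl s))
    (s t phiL psiL : S)
    (hphi : IsPhiLim sa pl s t phiL) (hpsi : IsPsiLim sa pl s t psiL) :
    (sa (s * phiL) = phiL ∧ pl (phiL * t) = phiL ∧
      sa (s * psiL) = psiL ∧ pl (psiL * t) = psiL) ∧
    (∀ e : S, IsPhiLim sa pl (s * phiL) (phiL * t) e → e = phiL) ∧
    (∀ e : S, IsPsiLim sa pl (s * psiL) (psiL * t) e → e = psiL) := by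
  have hsa' : ∀ x, IsMinRightId x (sa x) := fun x => isMinRightId_of_isKer (hsa x)
  have hpl' : ∀ x, IsMinLeftId x (pl x) := fun x => isMinLeftId_of_isKer (hpl x)
  obtain ⟨hphi_sa, hphi_pl⟩ := hphi.sa_mul_eq_and_pl_mul_eq hsa' hpl'
  obtain ⟨hpsi_sa, hpsi_pl⟩ := hpsi.sa_mul_eq_and_pl_mul_eq hsa' hpl'
  refine ⟨⟨hphi_sa, hphi_pl, hpsi_sa, hpsi_pl⟩, fun e he => ?_, fun e he => ?_⟩
  · rw [he.eq_pl_of_sa_eq_pl hsa' hpl' (hphi_sa.trans hphi_pl.symm), hphi_pl]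
  · rw [he.eq_sa_of_sa_eq_pl hsa' hpl' (hpsi_sa.trans hpsi_pl.symm), hpsi_sa]

/-- `(s φ^{(s,t)})* = (φ^{(s,t)} t)⁺ = φ^{(s,t)}` and `(s ψ^{(s,t)})* = (ψ^{(s,t)} t)⁺ = ψ^{(s,t)}`;
consequently `φ^{(s φ^{(s,t)}, φ^{(s,t)} t)} = φ^{(s,t)}` and
`ψ^{(s ψ^{(s,t)}, ψ^{(s,t)} t)} = ψ^{(s,t)}`. -/
theorem stmt14 {S : Type*} [Semigroup S] [Fintype S] (sa pl : S → S)
    (hsa : ∀ s : S, IsKer (Subsemigroup.closure (rIds s)) (sa s))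
    (hpl : ∀ s : S, IsKer (Subsemigroup.closure (lIds s)) (pl s))
    (s t phiL psiL : S)
    (hphi : IsPhiLim sa pl s t phiL) (hpsi : IsPsiLim sa pl s t psiL) :
    (sa (s * phiL) = phiL ∧ pl (phiL * t) = phiL ∧
      sa (s * psiL) = psiL ∧ pl (psiL * t) = psiL) ∧
    (∀ e : S, IsPhiLim sa pl (s * phiL) (phiL * t) e → e = phiL) ∧
    (∀ e : S, IsPsiLim sa pl (s * psiL) (psiL * t) e → e = psiL) :=
  stmt14_general sa pl hsa hpl s t phiL psiL hphi hpsi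
end

section
/- Let S be a finite singleton-rich semigroup, s, t ∈ S, and e, f ∈ E(S) with t⁺ ≤ e and s* ≤ f. Then φ^{(s,t)} = φ^{(s,ft)} and ψ^{(s,t)} = ψ^{(se,t)}. -/
open scoped Classical

/- The hypotheses `s* f = s*` and `e t⁺ = t⁺` make the first steps of the two φ-sequences
(resp. ψ-sequences) coincide: `(s* (f t))⁺ = (s* t)⁺` and `s* (f t) = s* t`, and dually for ψ.
Both sequences are recursive, so they agree from then on, and so do their stable values. -/

section Sequences

variable {S : Type*} (sa pl : S → S)

theorem phiSeq_eq_of_le [Mul S] {s t s' t' : S} {k : ℕ}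
    (hk : phiSeq sa pl s t k = phiSeq sa pl s' t' k) {i : ℕ} (hi : k ≤ i) :
    phiSeq sa pl s t i = phiSeq sa pl s' t' i := by
  induction i, hi using Nat.le_induction with
  | base => exact hk
  | succ i _ ih => simp only [phiSeq, ih]

theorem psiSeq_eq_of_le [Mul S] {s t s' t' : S} {k : ℕ}
    (hk : psiSeq sa pl s t k = psiSeq sa pl s' t' k) {i : ℕ} (hi : k ≤ i) :
    psiSeq sa pl s t i = psiSeq sa pl s' t' i := by
  induction i, hi using Nat.le_induction with
  | base => exact hk
  | succ i _ ih => simp only [psiSeq, ih]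

theorem phiSeq_one_mul_left [Semigroup S] {s t f : S} (hf : sa s * f = sa s) :
    phiSeq sa pl s (f * t) 1 = phiSeq sa pl s t 1 := by
  simp only [phiSeq, phiF, ← mul_assoc, hf]

theorem psiSeq_one_mul_right [Semigroup S] {s t e : S} (he : e * pl t = pl t) :
    psiSeq sa pl (s * e) t 1 = psiSeq sa pl s t 1 := by
  simp only [psiSeq, psiF, mul_assoc, he]

theorem IsPhiLim.eq_of_phiSeq_eq [Mul S] {s t s' t' a b : S} {k : ℕ}
    (hk : phiSeq sa pl s t k = phiSeq sa pl s' t' k)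
    (ha : IsPhiLim sa pl s t a) (hb : IsPhiLim sa pl s' t' b) : a = b := by
  obtain ⟨N, hN⟩ := ha
  obtain ⟨N', hN'⟩ := hb
  have hi : k ≤ max k (max N N') := le_max_left _ _
  rw [← hN _ (le_max_of_le_right (le_max_left _ _)), ← hN' _ (le_max_of_le_right (le_max_right _ _)),
    phiSeq_eq_of_le sa pl hk hi]

theorem IsPsiLim.eq_of_psiSeq_eq [Mul S] {s t s' t' a b : S} {k : ℕ}
    (hk : psiSeq sa pl s t k = psiSeq sa pl s' t' k)
    (ha : IsPsiLim sa pl s t a) (hb : IsPsiLim sa pl s' t' b) : a = b := by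
  obtain ⟨N, hN⟩ := ha
  obtain ⟨N', hN'⟩ := hb
  have hi : k ≤ max k (max N N') := le_max_left _ _
  rw [← hN _ (le_max_of_le_right (le_max_left _ _)), ← hN' _ (le_max_of_le_right (le_max_right _ _)),
    psiSeq_eq_of_le sa pl hk hi]

end Sequences

theorem stmt16_general {S : Type*} [Semigroup S] (sa pl : S → S)
    (s t e f : S)
    (hte : nle (pl t) e) (hsf : nle (sa s) f)
    (phiL phiL' psiL psiL' : S)
    (h1 : IsPhiLim sa pl s t phiL) (h2 : IsPhiLim sa pl s (f * t) phiL')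
    (h3 : IsPsiLim sa pl s t psiL) (h4 : IsPsiLim sa pl (s * e) t psiL') :
    phiL = phiL' ∧ psiL = psiL' :=
  ⟨h1.eq_of_phiSeq_eq sa pl (phiSeq_one_mul_left sa pl hsf.1).symm h2,
    h3.eq_of_psiSeq_eq sa pl (psiSeq_one_mul_right sa pl hte.2).symm h4⟩

/-- If `e, f` are idempotents with `t⁺ ≤ e` and `s* ≤ f`, then `φ^{(s,t)} = φ^{(s,ft)}` and
`ψ^{(s,t)} = ψ^{(se,t)}`. -/
theorem stmt16 {S : Type*} [Semigroup S] [Fintype S] (sa pl : S → S)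
    (hsa : ∀ s : S, IsKer (Subsemigroup.closure (rIds s)) (sa s))
    (hpl : ∀ s : S, IsKer (Subsemigroup.closure (lIds s)) (pl s))
    (s t e f : S) (he : e * e = e) (hf : f * f = f)
    (hte : nle (pl t) e) (hsf : nle (sa s) f)
    (phiL phiL' psiL psiL' : S)
    (h1 : IsPhiLim sa pl s t phiL) (h2 : IsPhiLim sa pl s (f * t) phiL')
    (h3 : IsPsiLim sa pl s t psiL) (h4 : IsPsiLim sa pl (s * e) t psiL') :
    phiL = phiL' ∧ psiL = psiL' :=
  stmt16_general sa pl s t e f hte hsf phiL phiL' psiL psiL' h1 h2 h3 h4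
end

section
/- Let S be a finite singleton-rich semigroup and let s' ≪ s and t' ≪ t with (s')* ≠ (t')⁺. If ((s')⁺ s)* · t (t')* has (( (s')⁺ s)* t (t')*)⁺ = (t')⁺ (i.e. φ((s')⁺ s, t (t')*) = (t')⁺), then φ((s')⁺ s, t') = (t')⁺. Dually, if ψ((s')⁺ s, t (t')*) = (s')*, then ψ(s', t (t')*) = (s')*. -/
open scoped Classical

/-!
Write `x = (s')⁺ s`. Since `x*` is idempotent, it is an idempotent left identity of `x* y` for
every `y`, so it fixes the kernel element `φ(x, y) = (x* y)⁺` from the left. If `φ(x, t (t')*)`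
equals `(t')⁺`, then `x* (t')⁺ = (t')⁺`, and `t' = (t')⁺ t (t')*` gives `x* t' = t'`, whence
`φ(x, t') = (t')⁺`. Dually `ψ(x, y) (y⁺) = ψ(x, y)`, which together with `s' = (s')⁺ s (s')*` gives
`s' (t (t')*)⁺ = s'` under the second hypothesis.
-/

section

variable {S : Type*} [Semigroup S] {sa pl : S → S}

theorem IsKer.isIdempotentElem {T : Subsemigroup S} {x : S} (h : IsKer T x) :
    IsIdempotentElem x :=
  (h.2 x h.1).1

theorem IsKer.mul_eq_of_mem_lIds {y p e : S} (h : IsKer (Subsemigroup.closure (lIds y)) p)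
    (he : e ∈ lIds y) : e * p = p :=
  (h.2 e (Subsemigroup.subset_closure he)).1

theorem IsKer.mul_eq_of_mem_rIds {y p e : S} (h : IsKer (Subsemigroup.closure (rIds y)) p)
    (he : e ∈ rIds y) : p * e = p :=
  (h.2 e (Subsemigroup.subset_closure he)).2

theorem IsIdempotentElem.mem_lIds_mul {e : S} (he : IsIdempotentElem e) (w : S) :
    e ∈ lIds (e * w) :=
  ⟨he, by rw [← mul_assoc, he.eq]⟩

theorem IsIdempotentElem.mem_rIds_mul {e : S} (he : IsIdempotentElem e) (w : S) :
    e ∈ rIds (w * e) :=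
  ⟨he, by rw [mul_assoc, he.eq]⟩

theorem sa_mul_phiF (hsa : ∀ s : S, IsKer (Subsemigroup.closure (rIds s)) (sa s))
    (hpl : ∀ s : S, IsKer (Subsemigroup.closure (lIds s)) (pl s)) (x y : S) :
    sa x * phiF sa pl x y = phiF sa pl x y :=
  (hpl _).mul_eq_of_mem_lIds ((hsa x).isIdempotentElem.mem_lIds_mul y)

theorem psiF_mul_pl (hsa : ∀ s : S, IsKer (Subsemigroup.closure (rIds s)) (sa s))
    (hpl : ∀ s : S, IsKer (Subsemigroup.closure (lIds s)) (pl s)) (x y : S) :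
    psiF sa pl x y * pl y = psiF sa pl x y :=
  (hsa _).mul_eq_of_mem_rIds ((hpl y).isIdempotentElem.mem_rIds_mul x)

theorem ll.mul_eq_of_mul_pl_eq {t' t e : S} (ht : ll sa pl t' t) (he : e * pl t' = pl t') :
    e * t' = t' := by
  rw [ht]
  simp only [← mul_assoc, he]

theorem ll.mul_eq_of_sa_mul_eq {s' s e : S} (hs : ll sa pl s' s) (he : sa s' * e = sa s') :
    s' * e = s' := by
  rw [hs, mul_assoc _ (sa s') e, he]

end

theorem stmt17_general {S : Type*} [Semigroup S] (sa pl : S → S)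
    (hsa : ∀ s : S, IsKer (Subsemigroup.closure (rIds s)) (sa s))
    (hpl : ∀ s : S, IsKer (Subsemigroup.closure (lIds s)) (pl s))
    (s s' t t' : S) (hs : ll sa pl s' s) (ht : ll sa pl t' t) :
    (phiF sa pl (pl s' * s) (t * sa t') = pl t' → phiF sa pl (pl s' * s) t' = pl t') ∧
    (psiF sa pl (pl s' * s) (t * sa t') = sa s' → psiF sa pl s' (t * sa t') = sa s') := by
  constructor
  · intro hphi
    have hfix : sa (pl s' * s) * pl t' = pl t' := by
      simpa only [hphi] using sa_mul_phiF hsa hpl (pl s' * s) (t * sa t')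
    rw [phiF, ht.mul_eq_of_mul_pl_eq hfix]
  · intro hpsi
    have hfix : sa s' * pl (t * sa t') = sa s' := by
      simpa only [hpsi] using psiF_mul_pl hsa hpl (pl s' * s) (t * sa t')
    rw [psiF, hs.mul_eq_of_sa_mul_eq hfix]

/-- Let `s' ≪ s` and `t' ≪ t` with `(s')* ≠ (t')⁺`. If `φ((s')⁺ s, t (t')*) = (t')⁺` then
`φ((s')⁺ s, t') = (t')⁺`; dually, if `ψ((s')⁺ s, t (t')*) = (s')*` then
`ψ(s', t (t')*) = (s')*`. -/
theorem stmt17 {S : Type*} [Semigroup S] [Fintype S] (sa pl : S → S)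
    (hsa : ∀ s : S, IsKer (Subsemigroup.closure (rIds s)) (sa s))
    (hpl : ∀ s : S, IsKer (Subsemigroup.closure (lIds s)) (pl s))
    (s s' t t' : S) (hs : ll sa pl s' s) (ht : ll sa pl t' t) (hne : sa s' ≠ pl t') :
    (phiF sa pl (pl s' * s) (t * sa t') = pl t' → phiF sa pl (pl s' * s) t' = pl t') ∧
    (psiF sa pl (pl s' * s) (t * sa t') = sa s' → psiF sa pl s' (t * sa t') = sa s') :=
  stmt17_general sa pl hsa hpl s s' t t' hs ht
end

section
/- Let S be a finite singleton-rich semigroup in which the product of any two idempotents is idempotent. Then the relation ≪ (defined by s ≪ t iff s = s⁺ t s*) is transitive, hence a partial order on S. -/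
open scoped Classical

/-!
If `s ≪ t`, then `t* s*` is idempotent by hypothesis and is a right identity of
`s = s⁺ t s*`, so it is absorbed by the kernel element `s*`; together with the fact that in a
singleton-rich semigroup `uv = v` forces `vu = v` for idempotents `u, v`, this gives
`s* ≤ t*`, and dually `s⁺ ≤ t⁺`, in the natural order of idempotents. Transitivity is then
`s = s⁺ t s* = (s⁺ t⁺) u (t* s*) = s⁺ u s*`, and antisymmetry follows from
`s* = t*`, `s⁺ = t⁺`.
-/

section Kernel

variable {S : Type*} [Semigroup S]

theorem IsKer.mul_self {T : Subsemigroup S} {x : S} (h : IsKer T x) : x * x = x :=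
  (h.2 x h.1).1

theorem mul_eq_left_of_mem_closure_rIds {s a : S} (ha : a ∈ Subsemigroup.closure (rIds s)) :
    s * a = s := by
  induction ha using Subsemigroup.closure_induction with
  | mem e he => exact he.2
  | mul a b _ _ ha hb => rw [← mul_assoc, ha, hb]

theorem mul_eq_right_of_mem_closure_lIds {s a : S} (ha : a ∈ Subsemigroup.closure (lIds s)) :
    a * s = s := by
  induction ha using Subsemigroup.closure_induction with
  | mem e he => exact he.2
  | mul a b _ _ ha hb => rw [mul_assoc, hb, ha]

theorem IsKer.mul_rIds {s x : S} (h : IsKer (Subsemigroup.closure (rIds s)) x) : s * x = s :=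
  mul_eq_left_of_mem_closure_rIds h.1

theorem IsKer.lIds_mul {s x : S} (h : IsKer (Subsemigroup.closure (lIds s)) x) : x * s = s :=
  mul_eq_right_of_mem_closure_lIds h.1

theorem IsKer.eq_of_rIds_idem {e x : S} (h : IsKer (Subsemigroup.closure (rIds e)) x)
    (he : e * e = e) : x = e := by
  rw [← (h.2 e (Subsemigroup.subset_closure ⟨he, he⟩)).1, h.mul_rIds]

theorem IsKer.eq_of_lIds_idem {e x : S} (h : IsKer (Subsemigroup.closure (lIds e)) x)
    (he : e * e = e) : x = e := by
  rw [← (h.2 e (Subsemigroup.subset_closure ⟨he, he⟩)).2, h.lIds_mul]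

theorem mul_eq_right_of_mul_eq_right {pl : S → S}
    (hpl : ∀ s : S, IsKer (Subsemigroup.closure (lIds s)) (pl s)) {u v : S} (hu : u * u = u)
    (hv : v * v = v) (huv : u * v = v) : v * u = v := by
  have h := ((hpl v).2 u (Subsemigroup.subset_closure ⟨hu, huv⟩)).2
  rwa [(hpl v).eq_of_lIds_idem hv] at h

theorem mul_eq_left_of_mul_eq_left {sa : S → S}
    (hsa : ∀ s : S, IsKer (Subsemigroup.closure (rIds s)) (sa s)) {u v : S} (hu : u * u = u)
    (hv : v * v = v) (huv : u * v = u) : v * u = u := by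
  have h := ((hsa u).2 v (Subsemigroup.subset_closure ⟨hv, huv⟩)).1
  rwa [(hsa u).eq_of_rIds_idem hu] at h

theorem ll_refl {sa pl : S → S} {s : S} (hsa : IsKer (Subsemigroup.closure (rIds s)) (sa s))
    (hpl : IsKer (Subsemigroup.closure (lIds s)) (pl s)) : ll sa pl s s := by
  rw [ll, hpl.lIds_mul, hsa.mul_rIds]

end Kernel

section SingletonRich

variable {S : Type*} [Semigroup S] {sa pl : S → S}
  (hsa : ∀ s : S, IsKer (Subsemigroup.closure (rIds s)) (sa s))
  (hpl : ∀ s : S, IsKer (Subsemigroup.closure (lIds s)) (pl s))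
  (hE : ∀ e f : S, e * e = e → f * f = f → (e * f) * (e * f) = e * f)
include hsa hpl hE

theorem ll.nle_sa {s t : S} (hst : ll sa pl s t) : nle (sa s) (sa t) := by
  set e := sa s
  set f := sa t
  have hee : e * e = e := (hsa s).mul_self
  have hfe_idem : (f * e) * (f * e) = f * e := hE f e (hsa t).mul_self hee
  have hs : s = pl s * t * (f * e) := calc
    s = pl s * (t * f) * e := by rw [(hsa t).mul_rIds]; exact hst
    _ = pl s * t * (f * e) := by simp only [mul_assoc]
  have hs_fe : s * (f * e) = s := by rw [hs, mul_assoc, hfe_idem]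
  have hfe : f * e = e := by
    have h := ((hsa s).2 _ (Subsemigroup.subset_closure ⟨hfe_idem, hs_fe⟩)).1
    rwa [mul_assoc, hee] at h
  have hefe : (e * f) * e = e * f :=
    mul_eq_right_of_mul_eq_right hpl hee (hE e f hee (hsa t).mul_self)
      (by rw [← mul_assoc, hee])
  exact ⟨by rw [← hefe, mul_assoc, hfe, hee], hfe⟩

theorem ll.nle_pl {s t : S} (hst : ll sa pl s t) : nle (pl s) (pl t) := by
  set p := pl s
  set q := pl t
  have hpp : p * p = p := (hpl s).mul_self
  have hpq_idem : (p * q) * (p * q) = p * q := hE p q hpp (hpl t).mul_self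
  have hs : s = (p * q) * (t * sa s) := calc
    s = p * (q * t) * sa s := by rw [(hpl t).lIds_mul]; exact hst
    _ = (p * q) * (t * sa s) := by simp only [mul_assoc]
  have hpq_s : (p * q) * s = s := by rw [hs, ← mul_assoc, hpq_idem]
  have hpq : p * q = p := by
    have h := ((hpl s).2 _ (Subsemigroup.subset_closure ⟨hpq_idem, hpq_s⟩)).2
    rwa [← mul_assoc, hpp] at h
  have hpqp : p * (q * p) = q * p :=
    mul_eq_left_of_mul_eq_left hsa (hE q p (hpl t).mul_self hpp) hpp
      (by rw [mul_assoc, hpp])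
  exact ⟨hpq, by rw [← hpqp, ← mul_assoc, hpq, hpp]⟩

theorem ll_trans {s t u : S} (hst : ll sa pl s t) (htu : ll sa pl t u) : ll sa pl s u := by
  obtain ⟨hpq, -⟩ := hst.nle_pl hsa hpl hE
  obtain ⟨-, hfe⟩ := hst.nle_sa hsa hpl hE
  calc s = pl s * (pl t * u * sa t) * sa s := by rw [← htu]; exact hst
    _ = (pl s * pl t) * u * (sa t * sa s) := by simp only [mul_assoc]
    _ = pl s * u * sa s := by rw [hpq, hfe]

theorem ll_antisymm {s t : S} (hst : ll sa pl s t) (hts : ll sa pl t s) : s = t := by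
  have hsa_eq : sa s = sa t := by
    rw [← (hst.nle_sa hsa hpl hE).1, (hts.nle_sa hsa hpl hE).2]
  have hpl_eq : pl s = pl t := by
    rw [← (hst.nle_pl hsa hpl hE).2, (hts.nle_pl hsa hpl hE).1]
  rw [hst, hsa_eq, hpl_eq, (hpl t).lIds_mul, (hsa t).mul_rIds]

end SingletonRich

theorem stmt18_general {S : Type*} [Semigroup S] (sa pl : S → S)
    (hsa : ∀ s : S, IsKer (Subsemigroup.closure (rIds s)) (sa s))
    (hpl : ∀ s : S, IsKer (Subsemigroup.closure (lIds s)) (pl s))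
    (hE : ∀ e f : S, e * e = e → f * f = f → (e * f) * (e * f) = e * f) :
    Transitive (ll sa pl) ∧ (∀ s : S, ll sa pl s s) ∧
      (∀ s t : S, ll sa pl s t → ll sa pl t s → s = t) :=
  ⟨fun _ _ _ => ll_trans hsa hpl hE, fun s => ll_refl (hsa s) (hpl s),
    fun _ _ => ll_antisymm hsa hpl hE⟩

/-- If the product of any two idempotents of `S` is idempotent, then `≪` is transitive,
hence (being reflexive and antisymmetric) a partial order on `S`. -/
theorem stmt18 {S : Type*} [Semigroup S] [Fintype S] (sa pl : S → S)
    (hsa : ∀ s : S, IsKer (Subsemigroup.closure (rIds s)) (sa s))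
    (hpl : ∀ s : S, IsKer (Subsemigroup.closure (lIds s)) (pl s))
    (hE : ∀ e f : S, e * e = e → f * f = f → (e * f) * (e * f) = e * f) :
    Transitive (ll sa pl) ∧ (∀ s : S, ll sa pl s s) ∧
      (∀ s t : S, ll sa pl s t → ll sa pl t s → s = t) :=
  stmt18_general sa pl hsa hpl hE
end
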